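/- arXiv:2205.02495 — 8 statements merged into one kernel-verified Lean document; each statement's English description precedes it below -/
import Mathlib

section
/- The two matrices [[1,0],[-1,1]] and [[1,1],[0,1]] generate the full special linear group SL(2, Z/nZ) for every positive integer n. -/
/-!
Powers of the two generators give every elementary matrix `[[1, x], [0, 1]]` and `[[1, 0], [x, 1]]`,
because `ℤ/nℤ` is additively generated by `1`. Left multiplication by a product of elementary
matrices replaces the lower-left entry `c` of `A` by `a - q * c`, and division with remainder of
representatives makes this remainder smaller than `c`. This Euclidean algorithm ends at an upper
triangular matrix, which is `diag(a, a⁻¹)` times an elementary matrix, and `diag(a, a⁻¹)` is itself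
a product of elementary matrices (Whitehead's lemma).
-/

open Matrix MatrixGroups

-- `ZMod 0 = ℤ`, where `val` is `natAbs`.
theorem ZMod.exists_val_sub_mul_lt :
    ∀ {n : ℕ} (a c : ZMod n), c ≠ 0 → ∃ q, (a - q * c).val < c.val
  | 0, (a : ℤ), (c : ℤ), hc => ⟨a / c, by
      change (a - a / c * c).natAbs < c.natAbs
      rw [mul_comm, ← EuclideanDomain.mod_eq_sub_mul_div]
      exact EuclideanDomain.mod_lt a hc⟩
  | n + 1, a, c, hc => by
      have hc : 0 < c.val := Nat.pos_of_ne_zero ((ZMod.val_ne_zero c).2 hc)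
      refine ⟨(a.val / c.val : ℕ), ?_⟩
      have hrem : a - (a.val / c.val : ℕ) * c = (a.val % c.val : ℕ) := by
        have h := congrArg (Nat.cast : ℕ → ZMod (n + 1)) (Nat.div_add_mod a.val c.val)
        simp only [Nat.cast_add, Nat.cast_mul, ZMod.natCast_zmod_val] at h
        linear_combination -h
      rw [hrem, ZMod.val_cast_of_lt ((Nat.mod_lt _ hc).trans (ZMod.val_lt c))]
      exact Nat.mod_lt _ hc

namespace Matrix.SpecialLinearGroup

variable {R : Type*} [CommRing R]

def upperRightHom : AddChar R SL(2, R) where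
  toFun x := ⟨!![1, x; 0, 1], by simp [det_fin_two_of]⟩
  map_zero_eq_one' := by ext i j; fin_cases i <;> fin_cases j <;> rfl
  map_add_eq_mul' a b := Subtype.ext <| by
    change !![1, a + b; 0, 1] = !![1, a; 0, 1] * !![1, b; 0, 1]
    simp [add_comm]

def lowerLeftHom : AddChar R SL(2, R) where
  toFun x := ⟨!![1, 0; x, 1], by simp [det_fin_two_of]⟩
  map_zero_eq_one' := by ext i j; fin_cases i <;> fin_cases j <;> rfl
  map_add_eq_mul' a b := Subtype.ext <| by
    change !![1, 0; a + b, 1] = !![1, 0; a, 1] * !![1, 0; b, 1]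
    simp

@[simp]
lemma coe_upperRightHom (x : R) :
    (upperRightHom x : Matrix (Fin 2) (Fin 2) R) = !![1, x; 0, 1] := rfl

@[simp]
lemma coe_lowerLeftHom (x : R) :
    (lowerLeftHom x : Matrix (Fin 2) (Fin 2) R) = !![1, 0; x, 1] := rfl

variable (R) in
def elementarySubgroup : Subgroup SL(2, R) :=
  Subgroup.closure (Set.range upperRightHom ∪ Set.range lowerLeftHom)

lemma upperRightHom_mem_elementarySubgroup (x : R) : upperRightHom x ∈ elementarySubgroup R :=
  Subgroup.subset_closure (Or.inl ⟨x, rfl⟩)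

lemma lowerLeftHom_mem_elementarySubgroup (x : R) : lowerLeftHom x ∈ elementarySubgroup R :=
  Subgroup.subset_closure (Or.inr ⟨x, rfl⟩)

lemma mem_elementarySubgroup_of_apply_one_zero_eq_zero {A : SL(2, R)} (hc : A 1 0 = 0) :
    A ∈ elementarySubgroup R := by
  have had : A 0 0 * A 1 1 = 1 := by
    have := A.det_coe
    rwa [det_fin_two, hc, mul_zero, sub_zero] at this
  -- For `A = !![a, b; 0, d]` and `w u = upperRightHom u * lowerLeftHom (-u⁻¹) * upperRightHom u`,
  -- this is `A = w a * w (-1) * upperRightHom (d * b)`, since `w a * w (-1) = diag(a, d)`.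
  have hA : A = upperRightHom (A 0 0) * lowerLeftHom (-A 1 1) * upperRightHom (A 0 0 - 1) *
      lowerLeftHom 1 * upperRightHom (A 1 1 * A 0 1 - 1) := by
    ext i j; fin_cases i <;> fin_cases j <;> simp [coe_mul, mul_apply, Fin.sum_univ_two, hc]
    all_goals grind
  rw [hA]
  apply_rules [mul_mem, upperRightHom_mem_elementarySubgroup, lowerLeftHom_mem_elementarySubgroup]

lemma elementarySubgroup_eq_top_of_exists_sub_mul_lt (f : R → ℕ)
    (hf : ∀ a c : R, c ≠ 0 → ∃ q, f (a - q * c) < f c) : elementarySubgroup R = ⊤ := by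
  refine (Subgroup.eq_top_iff' _).2 fun A ↦ ?_
  induction hm : f (A 1 0) using Nat.strong_induction_on generalizing A with
  | _ m ih =>
    by_cases hc : A 1 0 = 0
    · exact mem_elementarySubgroup_of_apply_one_zero_eq_zero hc
    obtain ⟨q, hq⟩ := hf (A 0 0) (A 1 0) hc
    set P := upperRightHom (-1) * lowerLeftHom 1 * upperRightHom (-1) * upperRightHom (-q)
    have hP : P ∈ elementarySubgroup R := by
      apply_rules only [mul_mem, upperRightHom_mem_elementarySubgroup,
        lowerLeftHom_mem_elementarySubgroup]
    have hP_coe : (P : Matrix (Fin 2) (Fin 2) R) = !![0, -1; 1, -q] := by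
      simp [P, coe_mul]
    refine (mul_mem_cancel_left hP).1 (ih _ (hq.trans_eq hm) (P * A) (congrArg f ?_))
    simp [coe_mul, hP_coe, mul_apply, Fin.sum_univ_two, sub_eq_add_neg]

lemma closure_lowerLeftHom_neg_one_upperRightHom_one
    (hR : Function.Surjective (Int.cast : ℤ → R)) :
    Subgroup.closure {lowerLeftHom (-1), upperRightHom 1} = elementarySubgroup R := by
  refine le_antisymm (Subgroup.closure_mono ?_)
    ((Subgroup.closure_le _).2 (Set.union_subset ?_ ?_))
  · rintro _ (rfl | rfl)
    exacts [Or.inr ⟨-1, rfl⟩, Or.inl ⟨1, rfl⟩]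
  · rintro _ ⟨x, rfl⟩
    obtain ⟨k, rfl⟩ := hR x
    rw [← zsmul_one, AddChar.map_zsmul_eq_zpow]
    exact zpow_mem (Subgroup.subset_closure (by simp)) k
  · rintro _ ⟨x, rfl⟩
    obtain ⟨k, rfl⟩ := hR x
    rw [show (k : R) = (-k) • (-1 : R) by simp, AddChar.map_zsmul_eq_zpow]
    exact zpow_mem (Subgroup.subset_closure (by simp)) _

end Matrix.SpecialLinearGroup

open Matrix.SpecialLinearGroup

/-- The matrices `[[1,0],[-1,1]]` and `[[1,1],[0,1]]` generate `SL(2, ℤ/nℤ)`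
for every positive integer `n`. -/
theorem sl2_generated_by_two_elementary_matrices (n : ℕ) :
    Subgroup.closure
      ({⟨!![1, 0; -1, 1], by simp [Matrix.det_fin_two_of]⟩,
        ⟨!![1, 1; 0, 1], by simp [Matrix.det_fin_two_of]⟩} :
        Set (Matrix.SpecialLinearGroup (Fin 2) (ZMod n))) = ⊤ := by
  change Subgroup.closure {lowerLeftHom (-1), upperRightHom 1} = ⊤
  rw [closure_lowerLeftHom_neg_one_upperRightHom_one ZMod.intCast_surjective]
  exact elementarySubgroup_eq_top_of_exists_sub_mul_lt ZMod.val ZMod.exists_val_sub_mul_lt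
end

section
/- Let G̃ be a group with central element h, let p : G̃ → Q be a surjective homomorphism with kernel generated by h (infinite cyclic), and let Γ ≤ G̃ be a subgroup of finite index n such that p restricted to Γ is surjective. Then Γ ∩ ⟨h⟩ = ⟨hⁿ⟩, Γ is normal in G̃, and G̃/Γ is cyclic of order n. -/
/-!
Since `p` maps `Γ` onto `Q` and `ker p = ⟨h⟩`, we get `Γ ⊔ ⟨h⟩ = G`. The normalizer of `Γ`
contains `Γ` and the central element `h`, so `Γ` is normal, and `G ⧸ Γ` is generated by the
image of `h`. That image therefore has order `[G : Γ] = n`, and `h ^ j ∈ Γ` exactly when `n ∣ j`.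
-/

open Subgroup

namespace Subgroup

variable {G Q : Type*} [Group G] [Group Q]

theorem sup_ker_eq_top_of_map_eq_top (f : G →* Q) {H : Subgroup G} (hH : H.map f = ⊤) :
    H ⊔ f.ker = ⊤ := by
  rw [← comap_map_eq, hH, comap_top]

theorem normal_of_sup_eq_top_of_le_center {H K : Subgroup G} (hK : K ≤ center G)
    (hHK : H ⊔ K = ⊤) : H.Normal := by
  rw [← normalizer_eq_top_iff, eq_top_iff, ← hHK]
  exact sup_le le_normalizer (hK.trans (center_le_normalizer _))

end Subgroup

theorem MonoidHom.ker_inf_zpowers {G Q : Type*} [Group G] [Group Q] (f : G →* Q) (g : G) :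
    f.ker ⊓ zpowers g = zpowers (g ^ orderOf (f g)) := by
  ext x
  simp only [mem_inf, MonoidHom.mem_ker, mem_zpowers_iff]
  constructor
  · rintro ⟨hx, j, rfl⟩
    obtain ⟨m, rfl⟩ := orderOf_dvd_iff_zpow_eq_one.mpr (by rwa [map_zpow] at hx)
    exact ⟨m, by rw [← zpow_natCast, ← zpow_mul]⟩
  · rintro ⟨m, rfl⟩
    refine ⟨?_, orderOf (f g) * m, by rw [zpow_mul, zpow_natCast]⟩
    rw [map_zpow, map_pow, pow_orderOf_eq_one, one_zpow]

namespace QuotientGroup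

variable {G : Type*} [Group G] {N : Subgroup G} [N.Normal]

theorem zpowers_mk_eq_top_of_sup_zpowers_eq_top {g : G} (hg : N ⊔ zpowers g = ⊤) :
    zpowers (g : G ⧸ N) = ⊤ := by
  have hmap : (N ⊔ zpowers g).map (mk' N) = zpowers (g : G ⧸ N) := by
    rw [Subgroup.map_sup, map_mk'_self, bot_sup_eq, MonoidHom.map_zpowers, coe_mk']
  rw [← hmap, hg, ← MonoidHom.range_eq_map, range_mk']

end QuotientGroup

open QuotientGroup

theorem index_n_subgroup_along_fiber_general {G Q : Type*} [Group G] [Group Q]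
    (h : G) (hcent : h ∈ Subgroup.center G)
    (p : G →* Q)
    (hker : p.ker = Subgroup.zpowers h)
    (Γ : Subgroup G) (n : ℕ) (hidx : Γ.index = n)
    (hsurj : ∀ q : Q, ∃ γ ∈ Γ, p γ = q) :
    Γ ⊓ Subgroup.zpowers h = Subgroup.zpowers (h ^ n) ∧
    Γ.Normal ∧
    ∃ g : G, ∀ x : G, ∃ k : ℤ, x * (g ^ k)⁻¹ ∈ Γ := by
  have hmap : Γ.map p = ⊤ := eq_top_iff.mpr fun q _ ↦ hsurj q
  have hsup : Γ ⊔ zpowers h = ⊤ := hker ▸ sup_ker_eq_top_of_map_eq_top p hmap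
  have hΓ : Γ.Normal := normal_of_sup_eq_top_of_le_center (zpowers_le.mpr hcent) hsup
  have hgen : zpowers (h : G ⧸ Γ) = ⊤ := zpowers_mk_eq_top_of_sup_zpowers_eq_top hsup
  have hord : orderOf (h : G ⧸ Γ) = n := by
    rw [orderOf_eq_card_of_zpowers_eq_top hgen, ← hidx, index]
  refine ⟨?_, hΓ, h, fun x ↦ ?_⟩
  · simpa only [ker_mk', coe_mk', hord] using (mk' Γ).ker_inf_zpowers h
  · obtain ⟨k, hk⟩ := mem_zpowers_iff.mp (hgen ▸ mem_top (x : G ⧸ Γ))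
    exact ⟨k, by rw [← div_eq_mul_inv, ← eq_iff_div_mem, ← hk, mk_zpow]⟩

/-- Let `G` be a group with a central element `h` of infinite order, `p : G → Q`
a surjective homomorphism with kernel `⟨h⟩`, and `Γ ≤ G` a subgroup of finite
index `n` mapping onto `Q`.  Then `Γ ∩ ⟨h⟩ = ⟨hⁿ⟩`, `Γ` is normal in `G`, and
`G/Γ` is cyclic (of order `n`, since the index of `Γ` is `n`). -/
theorem index_n_subgroup_along_fiber {G Q : Type*} [Group G] [Group Q]
    (h : G) (hcent : h ∈ Subgroup.center G) (hinf : ¬ IsOfFinOrder h)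
    (p : G →* Q) (hp : Function.Surjective p)
    (hker : p.ker = Subgroup.zpowers h)
    (Γ : Subgroup G) (n : ℕ) (hn : 0 < n) (hidx : Γ.index = n)
    (hsurj : ∀ q : Q, ∃ γ ∈ Γ, p γ = q) :
    Γ ⊓ Subgroup.zpowers h = Subgroup.zpowers (h ^ n) ∧
    Γ.Normal ∧
    ∃ g : G, ∀ x : G, ∃ k : ℤ, x * (g ^ k)⁻¹ ∈ Γ :=
  index_n_subgroup_along_fiber_general h hcent p hker Γ n hidx hsurj
end

section
/- Let G̃ be a group with central element h of infinite order, p : G̃ → Q surjective with kernel ⟨h⟩, and let Γ, Γ' be subgroups of index n in G̃ each mapping onto Q under p. Then the map α : Q → Z/nZ defined by requiring h^{a(γ)}γ ∈ Γ' for γ ∈ Γ with p(γ) = q (where α(q) = a(γ) mod n) is a well-defined group homomorphism. -/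
/-! Because `ker p = ⟨h⟩` and `Δ` surjects onto `Q`, the powers of `h` meet every left coset of
`Δ`, so `k ↦ h ^ k Δ` identifies `ℤ ⧸ {k | h ^ k ∈ Δ}` with `G ⧸ Δ`; hence `h ^ k ∈ Δ` forces
`[G : Δ] ∣ k`. For `Δ = Γ'` this makes the exponent `a` of a fixed `γ` well defined modulo `n`,
for `Δ = Γ` it makes it independent of the lift `γ ∈ Γ` of `q`, and since `h` is central,
`h ^ a γ · h ^ b δ = h ^ (a + b) γ δ`, which is additivity. -/

theorem Subgroup.index_comap_of_surjective_mk {G G' : Type*} [Group G] [Group G']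
    {Δ : Subgroup G} {f : G' →* G} (hf : Function.Surjective fun x => (f x : G ⧸ Δ)) :
    (Δ.comap f).index = Δ.index := by
  have key : ∀ x y : G',
      QuotientGroup.leftRel (Δ.comap f) x y ↔ QuotientGroup.leftRel Δ (f x) (f y) := by
    simp [QuotientGroup.leftRel_apply]
  refine Nat.card_congr (Equiv.ofBijective (Quotient.map' f fun x y => (key x y).mp) ⟨?_, ?_⟩)
  · exact Quotient.ind₂' fun x y hxy => Quotient.sound' ((key x y).mpr (Quotient.exact' hxy))
  · refine Quotient.ind' fun g => ?_
    obtain ⟨x, hx⟩ := hf g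
    exact ⟨x, hx⟩

theorem Int.index_dvd_of_mem {S : AddSubgroup ℤ} {k : ℤ} (hk : k ∈ S) : (S.index : ℤ) ∣ k := by
  obtain ⟨m, rfl⟩ := Int.subgroup_cyclic S
  rw [← AddSubgroup.zmultiples_eq_closure] at hk ⊢
  rw [Int.index_zmultiples, Int.natCast_natAbs]
  exact (abs_dvd _ _).mpr (Int.mem_zmultiples_iff.mp hk)

section

variable {G Q : Type*} [Group G] [Group Q] {h : G} {Δ : Subgroup G}

theorem index_dvd_of_zpow_mem (hcover : ∀ g : G, ∃ k : ℤ, h ^ k * g ∈ Δ) {k : ℤ}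
    (hk : h ^ k ∈ Δ) : (Δ.index : ℤ) ∣ k := by
  have hsurj : Function.Surjective fun x => (zpowersHom G h x : G ⧸ Δ) := by
    refine Quotient.ind' fun g => ?_
    obtain ⟨k, hk⟩ := hcover g
    exact ⟨.ofAdd (-k), QuotientGroup.eq.mpr (by simpa using hk)⟩
  rw [← Subgroup.index_comap_of_surjective_mk hsurj]
  exact Int.index_dvd_of_mem (S := (Δ.comap (zpowersHom G h)).toAddSubgroup') (by simpa using hk)

theorem intCast_eq_of_zpow_mul_mem (hcover : ∀ g : G, ∃ k : ℤ, h ^ k * g ∈ Δ) {g : G}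
    {a b : ℤ} (ha : h ^ a * g ∈ Δ) (hb : h ^ b * g ∈ Δ) : (a : ZMod Δ.index) = b := by
  refine (ZMod.intCast_eq_intCast_iff_dvd_sub _ _ _).mpr (index_dvd_of_zpow_mem hcover ?_)
  have hdiff : h ^ (b - a) = h ^ b * g * (h ^ a * g)⁻¹ := by group
  rw [hdiff]
  exact mul_mem hb (inv_mem ha)

theorem zpow_mul_mul_zpow_mul (hcent : h ∈ Subgroup.center G) (a b : ℤ) (g g' : G) :
    h ^ a * g * (h ^ b * g') = h ^ (a + b) * (g * g') := by
  rw [mul_assoc, ← mul_assoc g, (Subgroup.mem_center_iff.mp (zpow_mem hcent b) g), zpow_add]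
  group

theorem exists_zpow_mul_eq_of_map_eq {p : G →* Q} (hker : p.ker = Subgroup.zpowers h)
    {g g' : G} (hpg : p g = p g') : ∃ c : ℤ, h ^ c * g = g' := by
  have : g' * g⁻¹ ∈ Subgroup.zpowers h := by
    rw [← hker, MonoidHom.mem_ker, map_mul, map_inv, hpg, mul_inv_cancel]
  obtain ⟨c, hc⟩ := Subgroup.mem_zpowers_iff.mp this
  exact ⟨c, by rw [hc]; group⟩

theorem exists_zpow_mul_mem {p : G →* Q} (hker : p.ker = Subgroup.zpowers h)
    (hsurj : ∀ q : Q, ∃ γ ∈ Δ, p γ = q) (g : G) : ∃ k : ℤ, h ^ k * g ∈ Δ := by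
  obtain ⟨γ, hγ, hpγ⟩ := hsurj (p g)
  obtain ⟨c, hc⟩ := exists_zpow_mul_eq_of_map_eq hker hpγ.symm
  exact ⟨c, hc ▸ hγ⟩

theorem intCast_eq_of_zpow_mul_mem_of_map_eq {p : G →* Q} (hker : p.ker = Subgroup.zpowers h)
    {Γ Γ' : Subgroup G} (hcover : ∀ g : G, ∃ k : ℤ, h ^ k * g ∈ Γ)
    (hcover' : ∀ g : G, ∃ k : ℤ, h ^ k * g ∈ Γ') (hidx : Γ.index = Γ'.index)
    {γ δ : G} (hγ : γ ∈ Γ) (hδ : δ ∈ Γ) (hpγδ : p γ = p δ) {a b : ℤ}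
    (ha : h ^ a * γ ∈ Γ') (hb : h ^ b * δ ∈ Γ') : (a : ZMod Γ'.index) = b := by
  obtain ⟨c, rfl⟩ := exists_zpow_mul_eq_of_map_eq hker hpγδ
  have hcΓ : h ^ c ∈ Γ := by simpa using mul_mem hδ (inv_mem hγ)
  have hc : (c : ZMod Γ'.index) = 0 :=
    (ZMod.intCast_zmod_eq_zero_iff_dvd _ _).mpr (hidx ▸ index_dvd_of_zpow_mem hcover hcΓ)
  have hbc : h ^ (b + c) * γ ∈ Γ' := by rwa [zpow_add, mul_assoc]
  simpa [hc] using intCast_eq_of_zpow_mul_mem hcover' ha hbc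

end

theorem comparison_map_is_well_defined_hom_general {G Q : Type*} [Group G] [Group Q]
    (h : G) (hcent : h ∈ Subgroup.center G)
    (p : G →* Q)
    (hker : p.ker = Subgroup.zpowers h)
    (Γ Γ' : Subgroup G) (n : ℕ)
    (hidx : Γ.index = n) (hidx' : Γ'.index = n)
    (hsurj : ∀ q : Q, ∃ γ ∈ Γ, p γ = q)
    (hsurj' : ∀ q : Q, ∃ γ ∈ Γ', p γ = q) :
    ∃ α : Q → ZMod n,
      (∀ γ ∈ Γ, ∀ a : ℤ, h ^ a * γ ∈ Γ' → α (p γ) = (a : ZMod n)) ∧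
      (∀ γ ∈ Γ, ∃ a : ℤ, h ^ a * γ ∈ Γ') ∧
      (∀ q q' : Q, α (q * q') = α q + α q') := by
  subst hidx'
  have cover := exists_zpow_mul_mem hker hsurj
  have cover' := exists_zpow_mul_mem hker hsurj'
  obtain ⟨ε, hε⟩ := Classical.axiomOfChoice cover'
  choose lift hlift hplift using hsurj
  have key : ∀ γ ∈ Γ, ∀ a : ℤ, h ^ a * γ ∈ Γ' → (ε (lift (p γ)) : ZMod Γ'.index) = a :=
    fun γ hγ a ha => intCast_eq_of_zpow_mul_mem_of_map_eq hker cover cover' hidx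
      (hlift _) hγ (hplift _) (hε _) ha
  refine ⟨fun q => ε (lift q), key, fun γ _ => cover' γ, fun q q' => ?_⟩
  have hmul := key _ (mul_mem (hlift q) (hlift q')) _
    (zpow_mul_mul_zpow_mul hcent _ _ _ _ ▸ mul_mem (hε (lift q)) (hε (lift q')))
  rw [map_mul, hplift, hplift] at hmul
  simpa using hmul

/-- Given two index-`n` subgroups `Γ, Γ'` of `G` each surjecting onto `Q` under
`p` (where `h` is central of infinite order and `ker p = ⟨h⟩`), the assignment
`α : Q → ℤ/nℤ` defined by requiring `h^a · γ ∈ Γ'` for `γ ∈ Γ` with `p γ = q`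
(setting `α(q) = a mod n`) is a well-defined group homomorphism. -/
theorem comparison_map_is_well_defined_hom {G Q : Type*} [Group G] [Group Q]
    (h : G) (hcent : h ∈ Subgroup.center G) (hinf : ¬ IsOfFinOrder h)
    (p : G →* Q) (hp : Function.Surjective p)
    (hker : p.ker = Subgroup.zpowers h)
    (Γ Γ' : Subgroup G) (n : ℕ) (hn : 0 < n)
    (hidx : Γ.index = n) (hidx' : Γ'.index = n)
    (hsurj : ∀ q : Q, ∃ γ ∈ Γ, p γ = q)
    (hsurj' : ∀ q : Q, ∃ γ ∈ Γ', p γ = q) :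
    ∃ α : Q → ZMod n,
      (∀ γ ∈ Γ, ∀ a : ℤ, h ^ a * γ ∈ Γ' → α (p γ) = (a : ZMod n)) ∧
      (∀ γ ∈ Γ, ∃ a : ℤ, h ^ a * γ ∈ Γ') ∧
      (∀ q q' : Q, α (q * q') = α q + α q') :=
  comparison_map_is_well_defined_hom_general h hcent p hker Γ Γ' n hidx hidx' hsurj hsurj'
end

section
/- Consider the affine action of a group on (Z/2Z)^{2g} = V₁ ⊕ ⋯ ⊕ V_g (each V_i = (Z/2Z)²) generated by: (a) for each i, the linear maps acting on V_i by [[1,0],[1,1]] and [[1,1],[0,1]] and trivially on V_j for j ≠ i; and (b) for each 1 ≤ i ≤ g−1, the affine map C_i acting trivially on V_j (j ≠ i, i+1) and on coordinates (α_i, β_i, α_{i+1}, β_{i+1}) by (α_i, β_i − α_i + α_{i+1} + 1, α_{i+1}, β_{i+1} + α_i − α_{i+1} − 1). Then the 'vanishing number' modulo 2 — the parity of the number of indices i with (α_i, β_i) = (0,0) — is invariant under this action. -/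
open Function

/-- The phase space `(ℤ/2ℤ)² ⊕ ⋯ ⊕ (ℤ/2ℤ)²` (`g` blocks). -/
abbrev ModTwoSpace (g : ℕ) := Fin g → ZMod 2 × ZMod 2

/-- `A_i`: the linear map acting on the `i`-th block by `[[1,0],[1,1]]`
(note `-1 = 1` in `ℤ/2ℤ`), trivially elsewhere. -/
def Amap2 (g : ℕ) (i : Fin g) : Function.End (ModTwoSpace g) :=
  fun v => Function.update v i ((v i).1, (v i).1 + (v i).2)

/-- `B_i`: the linear map acting on the `i`-th block by `[[1,1],[0,1]]`,
trivially elsewhere. -/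
def Bmap2 (g : ℕ) (i : Fin g) : Function.End (ModTwoSpace g) :=
  fun v => Function.update v i ((v i).1 + (v i).2, (v i).2)

/-- `C_i`: the affine map sending `β_i ↦ β_i − α_i + α_{i+1} + 1` and
`β_{i+1} ↦ β_{i+1} + α_i − α_{i+1} − 1` (here `k` plays the role of `i+1`;
signs are irrelevant mod 2), fixing all other coordinates. -/
def Cmap2 (g : ℕ) (i k : Fin g) : Function.End (ModTwoSpace g) :=
  fun v =>
    Function.update
      (Function.update v i ((v i).1, (v i).2 + (v i).1 + (v k).1 + 1)) k
      ((v k).1, (v k).2 + (v i).1 + (v k).1 + 1)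

/-- The set of generators of the affine action. -/
def affineGens2 (g : ℕ) : Set (Function.End (ModTwoSpace g)) :=
  {F | (∃ i, F = Amap2 g i) ∨ (∃ i, F = Bmap2 g i) ∨
    ∃ i k : Fin g, (i : ℕ) + 1 = (k : ℕ) ∧ F = Cmap2 g i k}

/-- The vanishing number mod 2: the parity of the number of blocks equal to
`(0,0)`. -/
def vanishingNumber (g : ℕ) (v : ModTwoSpace g) : ZMod 2 :=
  ((Finset.univ.filter fun i => v i = 0).card : ZMod 2)

/-! The vanishing number is the sum, in `ℤ/2ℤ`, of the indicators of the blocks equal to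
`(0,0)`, so a map that changes a few blocks preserves it as soon as it preserves the parity of
the indicators of those blocks. The shears `A_i`, `B_i` fix the origin of `(ℤ/2ℤ)²` and permute
the other vectors, so they even preserve each indicator. For `C_i`, if `α_i ≠ α_{i+1}` nothing
moves; otherwise both `β_i` and `β_{i+1}` flip, which changes the indicator of a block only when
its `α` vanishes, and then it does so for both blocks at once. -/

theorem Finset.sum_comp_update {ι α M : Type*} [Fintype ι] [DecidableEq ι] [AddCommGroup M]
    (f : α → M) (v : ι → α) (i : ι) (x : α) :
    ∑ j, f (update v i x j) = ∑ j, f (v j) - f (v i) + f x := by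
  change ∑ j, (f ∘ update v i x) j = ∑ j, (f ∘ v) j - (f ∘ v) i + f x
  rw [comp_update, sum_update_of_mem (mem_univ i),
    sum_eq_add_sum_sdiff_singleton_of_mem (mem_univ i)]
  abel

def zeroIndicator (p : ZMod 2 × ZMod 2) : ZMod 2 := if p = 0 then 1 else 0

theorem vanishingNumber_eq_sum_zeroIndicator (g : ℕ) (v : ModTwoSpace g) :
    vanishingNumber g v = ∑ j, zeroIndicator (v j) :=
  Finset.natCast_card_filter (fun j => v j = 0) _ |>.trans rfl

theorem vanishingNumber_update (g : ℕ) (v : ModTwoSpace g) (i : Fin g) (x : ZMod 2 × ZMod 2) :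
    vanishingNumber g (update v i x) =
      vanishingNumber g v - zeroIndicator (v i) + zeroIndicator x := by
  simp only [vanishingNumber_eq_sum_zeroIndicator, Finset.sum_comp_update]

theorem vanishingNumber_update_of_zeroIndicator_eq {g : ℕ} (v : ModTwoSpace g) (i : Fin g)
    {x : ZMod 2 × ZMod 2} (h : zeroIndicator x = zeroIndicator (v i)) :
    vanishingNumber g (update v i x) = vanishingNumber g v := by
  rw [vanishingNumber_update, h, sub_add_cancel]

theorem zeroIndicator_shear_fst :
    ∀ p : ZMod 2 × ZMod 2, zeroIndicator (p.1, p.1 + p.2) = zeroIndicator p := by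
  decide

theorem zeroIndicator_shear_snd :
    ∀ p : ZMod 2 × ZMod 2, zeroIndicator (p.1 + p.2, p.2) = zeroIndicator p := by
  decide

theorem zeroIndicator_add_zeroIndicator_coupledShear :
    ∀ a b c d : ZMod 2, zeroIndicator (a, b + a + c + 1) + zeroIndicator (c, d + a + c + 1) =
      zeroIndicator (a, b) + zeroIndicator (c, d) := by
  decide

theorem vanishingNumber_Amap2 (g : ℕ) (i : Fin g) (v : ModTwoSpace g) :
    vanishingNumber g (Amap2 g i v) = vanishingNumber g v :=
  vanishingNumber_update_of_zeroIndicator_eq v i (zeroIndicator_shear_fst (v i))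

theorem vanishingNumber_Bmap2 (g : ℕ) (i : Fin g) (v : ModTwoSpace g) :
    vanishingNumber g (Bmap2 g i v) = vanishingNumber g v :=
  vanishingNumber_update_of_zeroIndicator_eq v i (zeroIndicator_shear_snd (v i))

theorem vanishingNumber_Cmap2 {g : ℕ} {i k : Fin g} (hik : i ≠ k) (v : ModTwoSpace g) :
    vanishingNumber g (Cmap2 g i k v) = vanishingNumber g v := by
  have hflip := zeroIndicator_add_zeroIndicator_coupledShear (v i).1 (v i).2 (v k).1 (v k).2
  rw [Cmap2, vanishingNumber_update, vanishingNumber_update, update_of_ne hik.symm]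
  linear_combination hflip

def vanishingNumberStabilizer (g : ℕ) : Submonoid (Function.End (ModTwoSpace g)) where
  carrier := {F | ∀ v, vanishingNumber g (F v) = vanishingNumber g v}
  one_mem' _ := rfl
  mul_mem' hF hF' v := (hF _).trans (hF' v)

theorem affineGens2_subset_vanishingNumberStabilizer (g : ℕ) :
    affineGens2 g ⊆ vanishingNumberStabilizer g := by
  rintro F (⟨i, rfl⟩ | ⟨i, rfl⟩ | ⟨i, k, hik, rfl⟩)
  · exact vanishingNumber_Amap2 g i
  · exact vanishingNumber_Bmap2 g i
  · exact vanishingNumber_Cmap2 (Fin.ne_of_val_ne (by omega))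

/-- The vanishing number modulo 2 is invariant under the affine action on
`(ℤ/2ℤ)^{2g}` generated by the `A_i`, `B_i` and `C_i`. -/
theorem vanishing_number_invariant (g : ℕ) :
    ∀ F ∈ Submonoid.closure (affineGens2 g),
      ∀ v : ModTwoSpace g, vanishingNumber g (F v) = vanishingNumber g v :=
  fun _ hF => Submonoid.closure_le.mpr (affineGens2_subset_vanishingNumberStabilizer g) hF
end

section
/- Consider the affine action on (Z/nZ)^{2g} generated by the transformations A_i, B_i (1 ≤ i ≤ g) and C_i (1 ≤ i ≤ g−1) given by: A_i : β_i ↦ β_i − α_i (other coordinates fixed); B_i : α_i ↦ α_i + β_i (other coordinates fixed); C_i : β_i ↦ β_i − α_i + α_{i+1} + 1, β_{i+1} ↦ β_{i+1} + α_i − α_{i+1} − 1 (other coordinates fixed). If n is odd, this action is transitive on (Z/nZ)^{2g}. -/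
/-- The phase space `((ℤ/nℤ)²)^g`. -/
abbrev ModNSpace (n g : ℕ) := Fin g → ZMod n × ZMod n

/-- `A_i : β_i ↦ β_i − α_i`, other coordinates fixed. -/
def AmapN (n g : ℕ) (i : Fin g) : Function.End (ModNSpace n g) :=
  fun v => Function.update v i ((v i).1, (v i).2 - (v i).1)

/-- `B_i : α_i ↦ α_i + β_i`, other coordinates fixed. -/
def BmapN (n g : ℕ) (i : Fin g) : Function.End (ModNSpace n g) :=
  fun v => Function.update v i ((v i).1 + (v i).2, (v i).2)

/-- `C_i : β_i ↦ β_i − α_i + α_{i+1} + 1`, `β_{i+1} ↦ β_{i+1} + α_i − α_{i+1} − 1`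
(here `k` plays the role of `i+1`), other coordinates fixed. -/
def CmapN (n g : ℕ) (i k : Fin g) : Function.End (ModNSpace n g) :=
  fun v =>
    Function.update
      (Function.update v i ((v i).1, (v i).2 - (v i).1 + (v k).1 + 1)) k
      ((v k).1, (v k).2 + (v i).1 - (v k).1 - 1)

/-- The generators of the affine action. -/
def affineGensN (n g : ℕ) : Set (Function.End (ModNSpace n g)) :=
  {F | (∃ i, F = AmapN n g i) ∨ (∃ i, F = BmapN n g i) ∨
    ∃ i k : Fin g, (i : ℕ) + 1 = (k : ℕ) ∧ F = CmapN n g i k}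

/-!
Every generator is a bijection of a finite set, so the monoid they generate is a group and its
translations form a subgroup `T` of `(ℤ/nℤ)^{2g}`. The word `B_i A_i B_i` is the linear quarter turn
`(α_i, β_i) ↦ (β_i, -α_i)`, so `T` is stable under quarter turns and negations of single pairs.
Write `C_i = L + t`; negating the pairs `i` and `i+1` commutes with `L` and sends `t` to `-t`, so
conjugating `C_i` by it gives `L - t` and hence `-2t ∈ T`. As `2` is invertible modulo the odd `n`,
combining `t` with its negation at one pair yields every `e_{β_j}`, and quarter turns give every
`e_{α_j}`. Thus `T` is everything, and the translation by `w - v` sends `v` to `w`.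
-/

@[simp]
theorem Function.End.mul_apply {α : Type*} (f g : Function.End α) (x : α) : (f * g) x = f (g x) :=
  rfl

@[simp]
theorem Function.End.one_apply {α : Type*} (x : α) : (1 : Function.End α) x = x :=
  rfl

/-- On a finite type an injective map is a permutation of finite order, so its inverse is one of
its powers. -/
theorem Submonoid.exists_mul_eq_one_of_injective {X : Type*} [Finite X]
    {M : Submonoid (Function.End X)} {f : Function.End X} (hf : f ∈ M)
    (hinj : Function.Injective f) : ∃ f' ∈ M, f * f' = 1 := by
  set e := Equiv.ofBijective f (Finite.injective_iff_bijective.mp hinj)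
  obtain ⟨k, hk : e ^ k = e⁻¹⟩ : e⁻¹ ∈ Submonoid.powers e :=
    mem_powers_iff_mem_zpowers.mpr (inv_mem (Subgroup.mem_zpowers e))
  refine ⟨f ^ k, pow_mem hf k, funext fun x => ?_⟩
  have hfk : (f ^ k) x = (e ^ k) x := rfl
  rw [Function.End.mul_apply, hfk, hk]
  exact e.apply_symm_apply x

theorem AddSubgroup.mem_of_add_self_mem {n : ℕ} (hn : Odd n) {V : Type*} [AddCommGroup V]
    [Module (ZMod n) V] (H : AddSubgroup V) {x : V} (hx : x + x ∈ H) : x ∈ H := by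
  have h2 : (2 : ZMod n) * 2⁻¹ = 1 :=
    mod_cast ZMod.coe_mul_inv_eq_one 2 (Nat.coprime_two_left.mpr hn)
  have := ZMod.smul_mem hx (2 : ZMod n)⁻¹
  rwa [← two_smul (ZMod n), smul_smul, mul_comm, h2, one_smul] at this

section MapCoord

variable {ι Y : Type*} [DecidableEq ι]

def mapCoord (j : ι) : Function.End Y →* Function.End (ι → Y) where
  toFun φ v := Function.update v j (φ (v j))
  map_one' := funext fun v => Function.update_eq_self j v
  map_mul' φ ψ := funext fun v => by
    change _ = Function.update (Function.update v j (ψ (v j))) j _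
    simp

theorem mapCoord_apply (j : ι) (φ : Function.End Y) (v : ι → Y) :
    mapCoord j φ v = Function.update v j (φ (v j)) := rfl

theorem mapCoord_add [Add Y] (j : ι) {φ : Function.End Y} (hφ : ∀ a b, φ (a + b) = φ a + φ b)
    (v w : ι → Y) : mapCoord j φ (v + w) = mapCoord j φ v + mapCoord j φ w := by
  funext i
  rcases eq_or_ne i j with rfl | hij
  · simp [mapCoord_apply, hφ]
  · simp [mapCoord_apply, hij]

theorem mapCoord_single_self [Zero Y] (j : ι) {φ : Function.End Y} (y : Y) :
    mapCoord j φ (Pi.single j y) = Pi.single j (φ y) := by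
  simp [mapCoord_apply, Pi.single, Function.update_idem]

end MapCoord

def quarterTurn (R : Type*) [Neg R] : Function.End (R × R) := fun p => (p.2, -p.1)

theorem quarterTurn_sq_apply {R : Type*} [AddGroup R] (p : R × R) :
    (quarterTurn R ^ 2) p = -p := by
  simp [pow_two, quarterTurn, Prod.ext_iff]

theorem quarterTurn_add {R : Type*} [AddCommGroup R] (p q : R × R) :
    quarterTurn R (p + q) = quarterTurn R p + quarterTurn R q := by
  simp [quarterTurn, add_comm]

theorem quarterTurn_pow_four (R : Type*) [AddGroup R] : quarterTurn R ^ 4 = 1 := by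
  funext p
  simp [pow_succ, quarterTurn]

section Translations

variable {X : Type*} [AddCommGroup X]

def translation (u : X) : Function.End X := fun x => x + u

theorem translation_apply (u x : X) : translation u x = x + u := rfl

theorem translation_mem_of_apply_eq_add {M : Submonoid (Function.End X)} {u : X}
    {F f f' : Function.End X} (hF : F ∈ M) (hf' : f' ∈ M) (hff' : f * f' = 1)
    (hFf : ∀ x, F x = f x + u) : translation u ∈ M := by
  have hf'y (y : X) : f (f' y) = y := by simpa using congrFun hff' y
  have : translation u = F * f' := funext fun y => by
    rw [Function.End.mul_apply, hFf, hf'y, translation_apply]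
  exact this ▸ mul_mem hF hf'

variable [Finite X]

def translationSubgroup (M : Submonoid (Function.End X)) : AddSubgroup X where
  carrier := {u | translation u ∈ M}
  add_mem' {u v} hu hv := by
    have : translation (u + v) = translation u * translation v :=
      funext fun x => by simp [translation_apply, add_comm u v, add_assoc]
    show translation (u + v) ∈ M
    exact this ▸ mul_mem hu hv
  zero_mem' := by
    have : translation (0 : X) = 1 := funext add_zero
    show translation (0 : X) ∈ M
    exact this ▸ M.one_mem
  neg_mem' {u} hu := by
    obtain ⟨f', hf', hf'u⟩ := Submonoid.exists_mul_eq_one_of_injective hu (add_left_injective u)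
    exact translation_mem_of_apply_eq_add M.one_mem hf' hf'u fun x => by
      simp [translation_apply]

theorem apply_mem_translationSubgroup {M : Submonoid (Function.End X)} {P P' : Function.End X}
    (hP : P ∈ M) (hP' : P' ∈ M) (hPP' : P * P' = 1) (hadd : ∀ x y, P (x + y) = P x + P y) {u : X}
    (hu : u ∈ translationSubgroup M) : P u ∈ translationSubgroup M :=
  translation_mem_of_apply_eq_add (mul_mem hP hu) hP' hPP' fun x => hadd x u

end Translations

namespace AffineAction

variable {n g : ℕ}

local notation "𝓜" => Submonoid.closure (affineGensN n g)

theorem mapCoord_quarterTurn_mem (j : Fin g) : mapCoord j (quarterTurn (ZMod n)) ∈ 𝓜 := by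
  have hA : AmapN n g j ∈ 𝓜 := Submonoid.subset_closure (Or.inl ⟨j, rfl⟩)
  have hB : BmapN n g j ∈ 𝓜 := Submonoid.subset_closure (Or.inr (Or.inl ⟨j, rfl⟩))
  have : mapCoord j (quarterTurn (ZMod n)) = BmapN n g j * AmapN n g j * BmapN n g j := by
    funext v i
    rcases eq_or_ne i j with rfl | hij
    · simp [mapCoord_apply, AmapN, BmapN, quarterTurn]
    · simp [mapCoord_apply, AmapN, BmapN, hij]
  exact this ▸ mul_mem (mul_mem hB hA) hB

theorem mapCoord_quarterTurn_sq_mem (j : Fin g) : mapCoord j (quarterTurn (ZMod n) ^ 2) ∈ 𝓜 :=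
  map_pow (mapCoord j) _ 2 ▸ pow_mem (mapCoord_quarterTurn_mem j) 2

theorem cmapN_injective {i k : Fin g} (hik : i ≠ k) : Function.Injective (CmapN n g i k) := by
  refine Function.LeftInverse.injective (g := fun v => Function.update
    (Function.update v i ((v i).1, (v i).2 + (v i).1 - (v k).1 - 1)) k
    ((v k).1, (v k).2 - (v i).1 + (v k).1 + 1)) fun v => funext fun j => ?_
  rcases eq_or_ne j i with rfl | hji
  · simp [CmapN, hik, Prod.ext_iff]
    ring
  rcases eq_or_ne j k with rfl | hjk
  · simp [CmapN, hik, Prod.ext_iff]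
    ring
  · simp [CmapN, hji, hjk]

/-- Negating the pairs `i` and `k` commutes with the linear part of `C_i` and negates its
translation part `t = e_{β_i} - e_{β_k}`, so the conjugate is `C_i - 2t`. -/
theorem conj_negPair_cmapN_apply {i k : Fin g} (hik : i ≠ k) (v : ModNSpace n g) :
    mapCoord i (quarterTurn (ZMod n) ^ 2) (mapCoord k (quarterTurn (ZMod n) ^ 2) (CmapN n g i k
      (mapCoord i (quarterTurn (ZMod n) ^ 2) (mapCoord k (quarterTurn (ZMod n) ^ 2) v)))) =
      CmapN n g i k v + (2 : ZMod n) • (Pi.single k (0, 1) - Pi.single i (0, 1)) := by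
  funext j
  rcases eq_or_ne j i with rfl | hji
  · simp [CmapN, mapCoord_apply, quarterTurn_sq_apply, hik, hik.symm, Prod.ext_iff]
    ring
  rcases eq_or_ne j k with rfl | hjk
  · simp [CmapN, mapCoord_apply, quarterTurn_sq_apply, hik, hik.symm, Prod.ext_iff]
    ring
  · simp [CmapN, mapCoord_apply, hji, hjk]

variable [NeZero n]

local notation "𝓣" => translationSubgroup (Submonoid.closure (affineGensN n g))

theorem mapCoord_quarterTurn_apply_mem (j : Fin g) {u : ModNSpace n g} (hu : u ∈ 𝓣) :
    mapCoord j (quarterTurn (ZMod n)) u ∈ 𝓣 := by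
  refine apply_mem_translationSubgroup (mapCoord_quarterTurn_mem j)
    (pow_mem (mapCoord_quarterTurn_mem j) 3) ?_ (mapCoord_add j quarterTurn_add) hu
  rw [← pow_succ', ← map_pow, quarterTurn_pow_four, map_one]

theorem single_snd_mem_of_adjacent (hodd : Odd n) {i k : Fin g} (hik : (i : ℕ) + 1 = k) :
    Pi.single i (0, 1) ∈ 𝓣 ∧ Pi.single k (0, 1) ∈ 𝓣 := by
  have hne : i ≠ k := Fin.ne_of_val_ne (by omega)
  have hC : CmapN n g i k ∈ 𝓜 := Submonoid.subset_closure (Or.inr (Or.inr ⟨i, k, hik, rfl⟩))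
  obtain ⟨C', hC', hCC'⟩ := Submonoid.exists_mul_eq_one_of_injective hC (cmapN_injective hne)
  have hN : mapCoord i (quarterTurn (ZMod n) ^ 2) * mapCoord k (quarterTurn (ZMod n) ^ 2) ∈ 𝓜 :=
    mul_mem (mapCoord_quarterTurn_sq_mem i) (mapCoord_quarterTurn_sq_mem k)
  set d : ModNSpace n g := Pi.single k (0, 1) - Pi.single i (0, 1) with hd_def
  have hd : d ∈ 𝓣 := by
    refine AddSubgroup.mem_of_add_self_mem hodd _ ?_
    rw [← two_smul (ZMod n)]
    exact translation_mem_of_apply_eq_add (mul_mem (mul_mem hN hC) hN) hC' hCC'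
      (conj_negPair_cmapN_apply hne)
  have hs : Pi.single k (0, 1) + Pi.single i (0, 1) ∈ 𝓣 := by
    convert mapCoord_quarterTurn_apply_mem i (mapCoord_quarterTurn_apply_mem i hd) using 1
    funext j
    rcases eq_or_ne j i with rfl | hji
    · simp [d, mapCoord_apply, quarterTurn, hne]
    · simp [d, mapCoord_apply, hji]
  constructor
  · refine AddSubgroup.mem_of_add_self_mem hodd _ ?_
    convert sub_mem hs hd using 1
    rw [hd_def]
    abel
  · refine AddSubgroup.mem_of_add_self_mem hodd _ ?_
    convert add_mem hs hd using 1
    rw [hd_def]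
    abel

theorem single_snd_mem (hodd : Odd n) (hg : 2 ≤ g) (j : Fin g) : Pi.single j (0, 1) ∈ 𝓣 := by
  by_cases hj : (j : ℕ) + 1 < g
  · exact (single_snd_mem_of_adjacent hodd (k := ⟨j + 1, hj⟩) rfl).1
  · exact (single_snd_mem_of_adjacent hodd (i := ⟨g - 2, by omega⟩) (k := j)
      (by dsimp only; omega)).2

theorem single_mem (hodd : Odd n) (hg : 2 ≤ g) (j : Fin g) (p : ZMod n × ZMod n) :
    Pi.single j p ∈ 𝓣 := by
  have h01 := single_snd_mem hodd hg j
  have h10 : Pi.single j (1, 0) ∈ 𝓣 := by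
    simpa [mapCoord_single_self, quarterTurn] using mapCoord_quarterTurn_apply_mem j h01
  have hp : (Pi.single j p : ModNSpace n g) =
      p.1 • (Pi.single j (1, 0) : ModNSpace n g) + p.2 • (Pi.single j (0, 1) : ModNSpace n g) := by
    rw [← Pi.single_smul, ← Pi.single_smul, ← Pi.single_add]
    simp
  rw [hp]
  exact add_mem (ZMod.smul_mem h10 _) (ZMod.smul_mem h01 _)

theorem translationSubgroup_eq_top (hodd : Odd n) (hg : 2 ≤ g) : 𝓣 = ⊤ := by
  refine eq_top_iff.mpr fun u _ => ?_
  rw [← Finset.univ_sum_single u]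
  exact sum_mem fun j _ => single_mem hodd hg j (u j)

end AffineAction

theorem affine_action_transitive_of_odd_general (n g : ℕ) (hodd : Odd n)
    (hg : 2 ≤ g) :
    ∀ v w : ModNSpace n g,
      ∃ F ∈ Submonoid.closure (affineGensN n g), F v = w := by
  have : NeZero n := ⟨hodd.pos.ne'⟩
  intro v w
  have hT : w - v ∈ translationSubgroup (Submonoid.closure (affineGensN n g)) := by
    rw [AffineAction.translationSubgroup_eq_top hodd hg]
    trivial
  exact ⟨translation (w - v), hT, add_sub_cancel v w⟩

/-- If `n` is odd, the affine action on `(ℤ/nℤ)^{2g}` generated by the `A_i`,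
`B_i` and `C_i` is transitive. -/
theorem affine_action_transitive_of_odd (n g : ℕ) (hn : 0 < n) (hodd : Odd n)
    (hg : 2 ≤ g) :
    ∀ v w : ModNSpace n g,
      ∃ F ∈ Submonoid.closure (affineGensN n g), F v = w :=
  affine_action_transitive_of_odd_general n g hodd hg
end

section
/- Consider the affine action on (Z/nZ)^{2g} generated by A_i, B_i, C_i as above, where A_i : β_i ↦ β_i − α_i; B_i : α_i ↦ α_i + β_i; C_i : β_i ↦ β_i − α_i + α_{i+1} + 1 and β_{i+1} ↦ β_{i+1} + α_i − α_{i+1} − 1. If n is even, this action has exactly two orbits on (Z/nZ)^{2g}, distinguished by the parity invariant obtained by reducing mod 2 and counting mod 2 the number of indices i with (α_i, β_i) ≡ (0,0) mod 2. -/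
/-- The mod-2 vanishing-number parity of an element of `((ℤ/nℤ)²)^g` (for
`2 ∣ n`): the parity of the number of blocks congruent to `(0,0)` mod 2. -/
def vanishParityN (n g : ℕ) (hn2 : (2 : ℕ) ∣ n) (v : ModNSpace n g) : ZMod 2 :=
  ((Finset.univ.filter fun i =>
    ZMod.castHom hn2 (ZMod 2) (v i).1 = 0 ∧
    ZMod.castHom hn2 (ZMod 2) (v i).2 = 0).card : ZMod 2)

/-!
Reducing mod 2 commutes with the generators, and on `(ℤ/2ℤ)²`-blocks each generator preserves
the number of vanishing blocks mod 2 (a finite check), so the parity is an orbit invariant.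
Conversely, `A_i` and `B_i` act on block `i` by elementary matrices, enough to run the Euclidean
algorithm and make every `α_i` zero. Once all `α` vanish, `C_i` moves one unit of `β` from block
`i + 1` to block `i`, so everything can be collected in block `0`; moving a unit into block `0`,
flipping the resulting `-1` in block `1` with `(A B A)² = -1`, and moving it again shows that
`(0, s)` and `(0, s + 2)` in block `0` lie in one orbit. Reachability is symmetric because the
generators are injective maps of a finite set, hence have finite order.
-/

open Function

theorem Submonoid.exists_mul_eq_one_of_mem_closure {α : Type*} [Finite α]
    {S : Set (Function.End α)} (hS : ∀ F ∈ S, Injective F) {F : Function.End α}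
    (hF : F ∈ Submonoid.closure S) : ∃ G ∈ Submonoid.closure S, G * F = 1 := by
  have hinj : Injective F := by
    induction hF using Submonoid.closure_induction with
    | mem F hF => exact hS F hF
    | one => exact injective_id
    | mul F G _ _ hF hG => exact hF.comp hG
  set σ := Equiv.ofBijective F hinj.bijective_of_finite
  have hσ : MulAction.toEndHom σ = F := rfl
  refine ⟨F ^ (orderOf σ - 1), pow_mem hF _, ?_⟩
  rw [← pow_succ, Nat.sub_add_cancel (orderOf_pos σ), ← hσ, ← map_pow, pow_orderOf_eq_one,
    map_one]

namespace ModNSpace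

variable {n g : ℕ}

section parity

variable (hn2 : 2 ∣ n)

def vanishInd (p : ZMod n × ZMod n) : ZMod 2 :=
  if ZMod.castHom hn2 (ZMod 2) p.1 = 0 ∧ ZMod.castHom hn2 (ZMod 2) p.2 = 0 then 1 else 0

theorem vanishParityN_eq_sum (v : ModNSpace n g) :
    vanishParityN n g hn2 v = ∑ j, vanishInd hn2 (v j) :=
  Finset.natCast_card_filter _ _

theorem vanishParityN_update (v : ModNSpace n g) (i : Fin g) (p : ZMod n × ZMod n) :
    vanishParityN n g hn2 (update v i p) =
      vanishParityN n g hn2 v + vanishInd hn2 p - vanishInd hn2 (v i) := by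
  simp only [vanishParityN_eq_sum, apply_update (fun _ => vanishInd hn2),
    Finset.sum_update_of_mem (Finset.mem_univ i), Fintype.sum_eq_add_sum_compl i,
    Finset.compl_eq_univ_sdiff]
  ring

theorem vanishParityN_AmapN (i : Fin g) (v : ModNSpace n g) :
    vanishParityN n g hn2 (AmapN n g i v) = vanishParityN n g hn2 v := by
  have key : ∀ a b : ZMod 2, (if a = 0 ∧ b - a = 0 then 1 else 0 : ZMod 2) =
      if a = 0 ∧ b = 0 then 1 else 0 := by decide
  rw [AmapN, vanishParityN_update, vanishInd, vanishInd, map_sub, key]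
  ring

theorem vanishParityN_BmapN (i : Fin g) (v : ModNSpace n g) :
    vanishParityN n g hn2 (BmapN n g i v) = vanishParityN n g hn2 v := by
  have key : ∀ a b : ZMod 2, (if a + b = 0 ∧ b = 0 then 1 else 0 : ZMod 2) =
      if a = 0 ∧ b = 0 then 1 else 0 := by decide
  rw [BmapN, vanishParityN_update, vanishInd, vanishInd, map_add, key]
  ring

theorem vanishParityN_CmapN {i k : Fin g} (hik : i ≠ k) (v : ModNSpace n g) :
    vanishParityN n g hn2 (CmapN n g i k v) = vanishParityN n g hn2 v := by
  have key : ∀ a b c d : ZMod 2,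
      (if a = 0 ∧ b - a + c + 1 = 0 then 1 else 0 : ZMod 2) +
        (if c = 0 ∧ d + a - c - 1 = 0 then 1 else 0) =
      (if a = 0 ∧ b = 0 then 1 else 0) + (if c = 0 ∧ d = 0 then 1 else 0) := by decide
  rw [CmapN, vanishParityN_update, vanishParityN_update, update_of_ne hik.symm]
  simp only [vanishInd, map_add, map_sub, map_one]
  set φ := ZMod.castHom hn2 (ZMod 2)
  linear_combination key (φ (v i).1) (φ (v i).2) (φ (v k).1) (φ (v k).2)

theorem vanishParityN_apply_of_mem_affineGensN {F : Function.End (ModNSpace n g)}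
    (hF : F ∈ affineGensN n g) (v : ModNSpace n g) :
    vanishParityN n g hn2 (F v) = vanishParityN n g hn2 v := by
  rcases hF with ⟨i, rfl⟩ | ⟨i, rfl⟩ | ⟨i, k, hik, rfl⟩
  · exact vanishParityN_AmapN hn2 i v
  · exact vanishParityN_BmapN hn2 i v
  · exact vanishParityN_CmapN hn2 (Fin.ne_of_val_ne (by omega)) v

theorem vanishParityN_apply_of_mem_closure {F : Function.End (ModNSpace n g)}
    (hF : F ∈ Submonoid.closure (affineGensN n g)) (v : ModNSpace n g) :
    vanishParityN n g hn2 (F v) = vanishParityN n g hn2 v := by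
  induction hF using Submonoid.closure_induction generalizing v with
  | mem F hF => exact vanishParityN_apply_of_mem_affineGensN hn2 hF v
  | one => rfl
  | mul F G _ _ hF hG => exact (hF (G v)).trans (hG v)

end parity

theorem leftInverse_AmapN (i : Fin g) :
    LeftInverse (fun v : ModNSpace n g => update v i ((v i).1, (v i).2 + (v i).1))
      (AmapN n g i) := fun v => by
  simp [AmapN]

theorem leftInverse_BmapN (i : Fin g) :
    LeftInverse (fun v : ModNSpace n g => update v i ((v i).1 - (v i).2, (v i).2))
      (BmapN n g i) := fun v => by
  simp [BmapN]

theorem leftInverse_CmapN {i k : Fin g} (hik : i ≠ k) :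
    LeftInverse (fun v : ModNSpace n g =>
        update (update v i ((v i).1, (v i).2 + (v i).1 - (v k).1 - 1)) k
          ((v k).1, (v k).2 - (v i).1 + (v k).1 + 1))
      (CmapN n g i k) := fun v => by
  funext j
  rcases eq_or_ne j k with rfl | hjk
  · simp only [CmapN, update_self, update_of_ne hik]
    exact Prod.ext rfl (by ring)
  rcases eq_or_ne j i with rfl | hji
  · simp only [CmapN, update_self, update_of_ne hik]
    exact Prod.ext rfl (by ring)
  · simp [CmapN, update_of_ne hjk, update_of_ne hji]

theorem injective_of_mem_affineGensN {F : Function.End (ModNSpace n g)}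
    (hF : F ∈ affineGensN n g) : Injective F := by
  rcases hF with ⟨i, rfl⟩ | ⟨i, rfl⟩ | ⟨i, k, hik, rfl⟩
  · exact (leftInverse_AmapN i).injective
  · exact (leftInverse_BmapN i).injective
  · exact (leftInverse_CmapN (Fin.ne_of_val_ne (by omega))).injective

variable (n g) in
def Reaches (v w : ModNSpace n g) : Prop :=
  ∃ F ∈ Submonoid.closure (affineGensN n g), F v = w

namespace Reaches

theorem refl (v : ModNSpace n g) : Reaches n g v v :=
  ⟨1, one_mem _, rfl⟩

theorem trans {u v w : ModNSpace n g} : Reaches n g u v → Reaches n g v w → Reaches n g u w := by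
  rintro ⟨F, hF, rfl⟩ ⟨G, hG, rfl⟩
  exact ⟨G * F, mul_mem hG hF, rfl⟩

theorem symm [NeZero n] {v w : ModNSpace n g} : Reaches n g v w → Reaches n g w v := by
  rintro ⟨F, hF, rfl⟩
  obtain ⟨G, hG, hGF⟩ :=
    Submonoid.exists_mul_eq_one_of_mem_closure (fun _ ↦ injective_of_mem_affineGensN) hF
  exact ⟨G, hG, congrFun hGF v⟩

theorem of_mem_affineGensN {F : Function.End (ModNSpace n g)} (hF : F ∈ affineGensN n g)
    (v : ModNSpace n g) : Reaches n g v (F v) :=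
  ⟨F, Submonoid.subset_closure hF, rfl⟩

theorem vanishParityN_eq (hn2 : 2 ∣ n) {v w : ModNSpace n g} :
    Reaches n g v w → vanishParityN n g hn2 v = vanishParityN n g hn2 w := by
  rintro ⟨F, hF, rfl⟩
  exact (vanishParityN_apply_of_mem_closure hn2 hF v).symm

end Reaches

variable (n g) in
def IsBlockMove (f : ZMod n × ZMod n → ZMod n × ZMod n) : Prop :=
  ∀ (v : ModNSpace n g) i, Reaches n g v (update v i (f (v i)))

namespace IsBlockMove

theorem id : IsBlockMove n g id := fun v i => by
  simpa using Reaches.refl v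

theorem comp {f f' : ZMod n × ZMod n → ZMod n × ZMod n} (hf : IsBlockMove n g f)
    (hf' : IsBlockMove n g f') : IsBlockMove n g (f ∘ f') := fun v i => by
  simpa using (hf' v i).trans (hf (update v i (f' (v i))) i)

theorem iterate {f : ZMod n × ZMod n → ZMod n × ZMod n} (hf : IsBlockMove n g f) (q : ℕ) :
    IsBlockMove n g f^[q] := by
  induction q with
  | zero => exact id
  | succ q ih => rw [iterate_succ']; exact hf.comp ih

theorem snd_sub_fst : IsBlockMove n g fun p => (p.1, p.2 - p.1) := fun v i =>
  Reaches.of_mem_affineGensN (Or.inl ⟨i, rfl⟩) v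

theorem fst_add_snd : IsBlockMove n g fun p => (p.1 + p.2, p.2) := fun v i =>
  Reaches.of_mem_affineGensN (Or.inr (Or.inl ⟨i, rfl⟩)) v

theorem snd_sub_nsmul_fst (q : ℕ) : IsBlockMove n g fun p => (p.1, p.2 - q • p.1) := by
  convert snd_sub_fst.iterate q using 1
  funext p
  induction q with
  | zero => simp
  | succ q ih => rw [iterate_succ_apply', ← ih, succ_nsmul, sub_add_eq_sub_sub]

theorem rotate : IsBlockMove n g fun p => (p.2, -p.1) := by
  convert (snd_sub_fst.comp fst_add_snd).comp snd_sub_fst using 1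
  funext p
  simp

theorem neg : IsBlockMove n g Neg.neg := by
  convert rotate.comp rotate using 1
  funext p
  ext <;> simp

end IsBlockMove

theorem exists_isBlockMove_fst_eq_zero [NeZero n] (p : ZMod n × ZMod n) :
    ∃ f, IsBlockMove n g f ∧ (f p).1 = 0 := by
  induction h : p.1.val using Nat.strong_induction_on generalizing p with
  | _ a ih =>
    rcases Nat.eq_zero_or_pos a with rfl | ha
    · exact ⟨_root_.id, IsBlockMove.id, (ZMod.val_eq_zero _).1 h⟩
    set q := p.2.val / a
    -- one division step of the Euclidean algorithm, then exchange the two entries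
    have hrem : p.2 - q • p.1 = ((p.2.val % a : ℕ) : ZMod n) := by
      conv_lhs => rw [← ZMod.natCast_zmod_val p.1, ← ZMod.natCast_zmod_val p.2, h,
        ← Nat.div_add_mod p.2.val a]
      push_cast [nsmul_eq_mul]
      ring
    have hlt : (p.2 - q • p.1).val < a := by
      rw [hrem, ZMod.val_natCast_of_lt ((Nat.mod_lt _ ha).trans (h ▸ p.1.val_lt))]
      exact Nat.mod_lt _ ha
    obtain ⟨f, hf, hf0⟩ := ih _ hlt (p.2 - q • p.1, -p.1) rfl
    exact ⟨f ∘ (fun p => (p.2, -p.1)) ∘ fun p => (p.1, p.2 - q • p.1),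
      hf.comp (IsBlockMove.rotate.comp (IsBlockMove.snd_sub_nsmul_fst q)), hf0⟩

theorem exists_reaches_forall_fst_eq_zero [NeZero n] (v : ModNSpace n g) :
    ∃ w, Reaches n g v w ∧ ∀ j, (w j).1 = 0 := by
  suffices ∀ s : Finset (Fin g), ∃ w, Reaches n g v w ∧ ∀ j ∈ s, (w j).1 = 0 by
    simpa using this Finset.univ
  intro s
  induction s using Finset.induction_on with
  | empty => exact ⟨v, Reaches.refl v, by simp⟩
  | insert i s _ ih =>
    obtain ⟨w, hvw, hw⟩ := ih
    obtain ⟨f, hf, hf0⟩ := exists_isBlockMove_fst_eq_zero (g := g) (w i)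
    refine ⟨update w i (f (w i)), hvw.trans (hf w i), fun j hj => ?_⟩
    rcases eq_or_ne j i with rfl | hji
    · simpa using hf0
    · simpa [hji] using hw j ((Finset.mem_insert.1 hj).resolve_left hji)

variable (n) in
def ofSnd (β : Fin g → ZMod n) : ModNSpace n g := fun j => (0, β j)

theorem ofSnd_update (β : Fin g → ZMod n) (k : Fin g) (c : ZMod n) :
    ofSnd n (update β k c) = update (ofSnd n β) k (0, c) :=
  comp_update (fun c => ((0 : ZMod n), c)) β k c

theorem CmapN_ofSnd {i k : Fin g} (hik : i ≠ k) (β : Fin g → ZMod n) :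
    CmapN n g i k (ofSnd n β) = ofSnd n (β + (Pi.single i 1 - Pi.single k 1)) := by
  funext j
  rcases eq_or_ne j k with rfl | hjk
  · simp [CmapN, ofSnd, hik, sub_eq_add_neg]
  rcases eq_or_ne j i with rfl | hji
  · simp [CmapN, ofSnd, hjk]
  · simp [CmapN, ofSnd, hjk, hji]

theorem reaches_ofSnd_add_nsmul {i k : Fin g} (hik : (i : ℕ) + 1 = k) (β : Fin g → ZMod n)
    (t : ℕ) : Reaches n g (ofSnd n β) (ofSnd n (β + t • (Pi.single i 1 - Pi.single k 1))) := by
  induction t with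
  | zero => simpa using Reaches.refl _
  | succ t ih =>
    refine ih.trans ?_
    rw [succ_nsmul, ← add_assoc, ← CmapN_ofSnd (Fin.ne_of_val_ne (by omega))]
    exact Reaches.of_mem_affineGensN (Or.inr (Or.inr ⟨i, k, hik, rfl⟩)) _

theorem reaches_ofSnd_update_neg (β : Fin g → ZMod n) (k : Fin g) :
    Reaches n g (ofSnd n β) (ofSnd n (update β k (-β k))) := by
  simpa [ofSnd_update, ofSnd] using IsBlockMove.neg (ofSnd n β) k

theorem exists_reaches_ofSnd_single [NeZero n] [NeZero g] (β : Fin g → ZMod n) :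
    ∃ s, Reaches n g (ofSnd n β) (ofSnd n (Pi.single 0 s)) := by
  suffices ∀ m : ℕ, 1 ≤ m → ∀ β : Fin g → ZMod n, (∀ j : Fin g, m ≤ (j : ℕ) → β j = 0) →
      ∃ s, Reaches n g (ofSnd n β) (ofSnd n (Pi.single 0 s)) from
    this g NeZero.one_le β fun j hj => absurd j.isLt (by omega)
  intro m hm
  induction m, hm using Nat.le_induction with
  | base =>
    intro β hβ
    refine ⟨β 0, ?_⟩
    convert Reaches.refl (ofSnd n β) using 2
    funext j
    rcases eq_or_ne j 0 with rfl | hj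
    · simp
    · simp [hj, hβ j (Nat.one_le_iff_ne_zero.2 (Fin.val_ne_zero_iff.2 hj))]
  | succ m hm ih =>
    intro β hβ
    by_cases hmg : m < g
    swap
    · exact ih β fun j hj => absurd j.isLt (by omega)
    -- move the whole entry of block `m` into block `m - 1`
    set k : Fin g := ⟨m, hmg⟩
    set i : Fin g := ⟨m - 1, by omega⟩
    have hik : (i : ℕ) + 1 = k := Nat.sub_add_cancel hm
    obtain ⟨s, hs⟩ := ih (β + (β k).val • (Pi.single i 1 - Pi.single k 1)) fun j hj => by
      rcases eq_or_ne j k with rfl | hjk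
      · rw [Pi.add_apply, Pi.smul_apply]
        simp [Fin.ne_of_val_ne (by omega : (i : ℕ) ≠ k), nsmul_eq_mul]
      · have hjm : (j : ℕ) ≠ m := Fin.val_ne_of_ne hjk
        have hji : j ≠ i := Fin.ne_of_val_ne (show (j : ℕ) ≠ m - 1 by omega)
        simp [hjk, hji, hβ j (by omega)]
    exact ⟨s, (reaches_ofSnd_add_nsmul hik β _).trans hs⟩

theorem reaches_ofSnd_single_add_two {i k : Fin g} (hik : (i : ℕ) + 1 = k) (s : ZMod n) :
    Reaches n g (ofSnd n (Pi.single i s)) (ofSnd n (Pi.single i (s + 2))) := by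
  have hne : i ≠ k := Fin.ne_of_val_ne (by omega)
  set d : Fin g → ZMod n := Pi.single i 1 - Pi.single k 1
  have h₁ := reaches_ofSnd_add_nsmul hik (Pi.single i s) 1
  set β₁ := Pi.single i s + 1 • d
  have h₂ := reaches_ofSnd_update_neg β₁ k
  have h₃ := reaches_ofSnd_add_nsmul hik (update β₁ k (-β₁ k)) 1
  convert h₁.trans (h₂.trans h₃) using 2
  funext j
  rcases eq_or_ne j k with rfl | hjk
  · simp [β₁, d, hne]
  rcases eq_or_ne j i with rfl | hji
  · simp [β₁, d, hjk, add_assoc, one_add_one_eq_two]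
  · simp [β₁, d, hjk, hji]

theorem reaches_ofSnd_single_natCast_mod_two [NeZero n] {i k : Fin g} (hik : (i : ℕ) + 1 = k)
    (m : ℕ) : Reaches n g (ofSnd n (Pi.single i (m : ZMod n)))
      (ofSnd n (Pi.single i ((m % 2 : ℕ) : ZMod n))) := by
  induction m using Nat.twoStepInduction with
  | zero => exact Reaches.refl _
  | one => exact Reaches.refl _
  | more m ih _ =>
    rw [Nat.add_mod_right]
    push_cast
    exact (reaches_ofSnd_single_add_two hik _).symm.trans ih

theorem vanishParityN_ofSnd_single_zero_ne_one (hn2 : 2 ∣ n) (i : Fin g) :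
    vanishParityN n g hn2 (ofSnd n (Pi.single i 0)) ≠
      vanishParityN n g hn2 (ofSnd n (Pi.single i 1)) := by
  have h (s : ZMod n) : ofSnd n (Pi.single i s) = update (ofSnd n 0) i (0, s) :=
    ofSnd_update 0 i s
  rw [h, h, vanishParityN_update, vanishParityN_update]
  simp only [vanishInd, map_zero, map_one]
  simp

theorem reaches_ofSnd_single_zero_or_one [NeZero n] [NeZero g] (hg : 2 ≤ g)
    (v : ModNSpace n g) :
    ∃ s ∈ ({0, 1} : Set (ZMod n)), Reaches n g v (ofSnd n (Pi.single 0 s)) := by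
  obtain ⟨w, hvw, hw⟩ := exists_reaches_forall_fst_eq_zero v
  have hw : w = ofSnd n fun j => (w j).2 := funext fun j => Prod.ext (hw j) rfl
  obtain ⟨s, hs⟩ := exists_reaches_ofSnd_single fun j => (w j).2
  have hik : ((0 : Fin g) : ℕ) + 1 = (⟨1, hg⟩ : Fin g) := rfl
  refine ⟨((s.val % 2 : ℕ) : ZMod n), ?_, ?_⟩
  · rcases Nat.mod_two_eq_zero_or_one s.val with h | h <;> simp [h]
  · rw [hw] at hvw
    have := reaches_ofSnd_single_natCast_mod_two (n := n) hik s.val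
    rw [ZMod.natCast_zmod_val] at this
    exact hvw.trans (hs.trans this)

end ModNSpace

open ModNSpace

/-- If `n` is even, the affine action on `(ℤ/nℤ)^{2g}` generated by the `A_i`,
`B_i` and `C_i` has exactly two orbits, distinguished by the mod-2
vanishing-number parity: two elements lie in the same orbit iff they have the
same parity invariant, and both parities occur. -/
theorem affine_action_two_orbits_of_even (n g : ℕ) (hn : 0 < n)
    (hn2 : (2 : ℕ) ∣ n) (hg : 2 ≤ g) :
    (∀ v w : ModNSpace n g,
      (∃ F ∈ Submonoid.closure (affineGensN n g), F v = w) ↔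
        vanishParityN n g hn2 v = vanishParityN n g hn2 w) ∧
    (∃ v w : ModNSpace n g, vanishParityN n g hn2 v ≠ vanishParityN n g hn2 w) := by
  have : NeZero n := ⟨hn.ne'⟩
  have : NeZero g := ⟨by omega⟩
  have hne := vanishParityN_ofSnd_single_zero_ne_one (g := g) hn2 0
  refine ⟨fun v w => ⟨Reaches.vanishParityN_eq hn2, fun hvw => ?_⟩, _, _, hne⟩
  obtain ⟨s, hs, hv⟩ := reaches_ofSnd_single_zero_or_one hg v
  obtain ⟨t, ht, hw⟩ := reaches_ofSnd_single_zero_or_one hg w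
  suffices s = t from hv.trans (this ▸ hw.symm)
  rw [Reaches.vanishParityN_eq hn2 hv, Reaches.vanishParityN_eq hn2 hw] at hvw
  rcases hs with rfl | rfl <;> rcases ht with rfl | rfl
  · rfl
  · exact absurd hvw hne
  · exact absurd hvw.symm hne
  · rfl
end

section
/- Let n be odd. Starting from any β ∈ Z/nZ, the set of elements reachable from (0,…,0,β) under the given affine action contains (0,…,0,β+2), and since 2 generates Z/nZ when n is odd, it contains (0,…,0,β') for every β' ∈ Z/nZ. -/
def lastBetaElt (n g : ℕ) (hg : 2 ≤ g) (β : ZMod n) : ModNSpace n g :=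
  fun j => if j = (⟨g - 1, by omega⟩ : Fin g) then (0, β) else 0

open Function

theorem ZMod.exists_nsmul_eq_of_isUnit {n : ℕ} [NeZero n] {u : ZMod n} (hu : IsUnit u)
    (x : ZMod n) : ∃ m : ℕ, m • u = x :=
  ⟨(x * u⁻¹).val, by
    rw [nsmul_eq_mul, ZMod.natCast_zmod_val, mul_assoc, ZMod.inv_mul_of_unit u hu, mul_one]⟩

theorem ZMod.isUnit_two_of_odd {n : ℕ} (hn : Odd n) : IsUnit (2 : ZMod n) := by
  exact_mod_cast (ZMod.isUnit_iff_coprime 2 n).mpr (Nat.coprime_two_left.mpr hn)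

variable {n g : ℕ}

section TwoHandles

variable {i k : Fin g} {v : ModNSpace n g} {p q : ZMod n × ZMod n}

theorem AmapN_update_update (hik : i ≠ k) :
    AmapN n g i (update (update v i p) k q) = update (update v i (p.1, p.2 - p.1)) k q := by
  simp [AmapN, update_of_ne hik, update_comm hik]

theorem BmapN_update_update (hik : i ≠ k) :
    BmapN n g i (update (update v i p) k q) = update (update v i (p.1 + p.2, p.2)) k q := by
  simp [BmapN, update_of_ne hik, update_comm hik]

theorem CmapN_update_update (hik : i ≠ k) :
    CmapN n g i k (update (update v i p) k q) =
      update (update v i (p.1, p.2 - p.1 + q.1 + 1)) k (q.1, q.2 + p.1 - q.1 - 1) := by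
  simp [CmapN, update_of_ne hik, update_comm hik]

end TwoHandles

def betaShiftWord (i k : Fin g) : Function.End (ModNSpace n g) :=
  let A := AmapN n g i; let B := BmapN n g i; let C := CmapN n g i k
  [C, B, B, C, C, C, B, B, A, A, B, B, C, A, B, B, C].prod

theorem betaShiftWord_mem_closure {i k : Fin g} (hik : (i : ℕ) + 1 = k) :
    betaShiftWord i k ∈ Submonoid.closure (affineGensN n g) := by
  have hA : AmapN n g i ∈ Submonoid.closure (affineGensN n g) :=
    Submonoid.subset_closure (Or.inl ⟨i, rfl⟩)
  have hB : BmapN n g i ∈ Submonoid.closure (affineGensN n g) :=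
    Submonoid.subset_closure (Or.inr (Or.inl ⟨i, rfl⟩))
  have hC : CmapN n g i k ∈ Submonoid.closure (affineGensN n g) :=
    Submonoid.subset_closure (Or.inr (Or.inr ⟨i, k, hik, rfl⟩))
  exact Submonoid.list_prod_mem _ (by simp [hA, hB, hC])

theorem betaShiftWord_update_update {i k : Fin g} (hik : i ≠ k) (v : ModNSpace n g)
    (b : ZMod n) :
    betaShiftWord i k (update (update v i 0) k (0, b)) = update (update v i 0) k (0, b + 2) := by
  -- `Function.End` has no `mul_apply` lemma; its tautological action unfolds the product instead.
  change (betaShiftWord i k : Function.End (ModNSpace n g)) • update (update v i 0) k (0, b) = _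
  simp only [betaShiftWord, List.prod_cons, List.prod_nil, mul_smul, one_smul,
    Function.End.smul_def, AmapN_update_update hik, BmapN_update_update hik,
    CmapN_update_update hik]
  refine congrArg₂ (fun p q => update (update v i p) k q) (Prod.ext ?_ ?_) (Prod.ext ?_ ?_) <;>
    simp only [Prod.fst_zero, Prod.snd_zero] <;> ring

theorem lastBetaElt_eq_update (hg : 2 ≤ g) (b : ZMod n) :
    lastBetaElt n g hg b = update (0 : ModNSpace n g) ⟨g - 1, by omega⟩ (0, b) := by
  funext j
  simp [lastBetaElt, update_apply]

theorem reachable_from_last_beta_of_odd_general (n g : ℕ) (hodd : Odd n)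
    (hg : 2 ≤ g) (β : ZMod n) :
    (∃ F ∈ Submonoid.closure (affineGensN n g),
        F (lastBetaElt n g hg β) = lastBetaElt n g hg (β + 2)) ∧
    (∀ β' : ZMod n, ∃ F ∈ Submonoid.closure (affineGensN n g),
        F (lastBetaElt n g hg β) = lastBetaElt n g hg β') := by
  let i : Fin g := ⟨g - 2, by omega⟩
  let k : Fin g := ⟨g - 1, by omega⟩
  have hik : (i : ℕ) + 1 = k := by simp only [i, k]; omega
  have hne : i ≠ k := Fin.ne_of_val_ne (by omega)
  have hmem := betaShiftWord_mem_closure (n := n) hik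
  have hshift : Semiconj (lastBetaElt n g hg) (· + 2) (betaShiftWord i k) := fun b => by
    simpa [lastBetaElt_eq_update] using (betaShiftWord_update_update hne 0 b).symm
  refine ⟨⟨_, hmem, (hshift β).symm⟩, fun β' => ?_⟩
  have : NeZero n := ⟨hodd.pos.ne'⟩
  obtain ⟨m, hm⟩ := ZMod.exists_nsmul_eq_of_isUnit (ZMod.isUnit_two_of_odd hodd) (β' - β)
  refine ⟨betaShiftWord i k ^ m, pow_mem hmem m, ?_⟩
  change (betaShiftWord i k)^[m] _ = _
  rw [← hshift.iterate_right m β, add_right_iterate_apply, hm, add_sub_cancel]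

/-- Let `n` be odd.  The set of elements reachable from `(0,…,0,β)` under the
affine action contains `(0,…,0,β+2)`, and (since `2` generates `ℤ/nℤ` for odd
`n`) it contains `(0,…,0,β')` for every `β'`. -/
theorem reachable_from_last_beta_of_odd (n g : ℕ) (hn : 0 < n) (hodd : Odd n)
    (hg : 2 ≤ g) (β : ZMod n) :
    (∃ F ∈ Submonoid.closure (affineGensN n g),
        F (lastBetaElt n g hg β) = lastBetaElt n g hg (β + 2)) ∧
    (∀ β' : ZMod n, ∃ F ∈ Submonoid.closure (affineGensN n g),
        F (lastBetaElt n g hg β) = lastBetaElt n g hg β') :=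
  reachable_from_last_beta_of_odd_general n g hodd hg β
end

section
/- In the group with presentation ⟨h, a₁, b₁, …, a_g, b_g | [a₁,b₁]⋯[a_g,b_g] = h^{2g−2}, h central⟩, the element h generates the center when g ≥ 2, and the quotient by ⟨h⟩ is isomorphic to the surface group ⟨ā₁, b̄₁, …, ā_g, b̄_g | [ā₁,b̄₁]⋯[ā_g,b̄_g] = 1⟩; moreover the quotient by the normal closure of hⁿ yields a central extension 0 → Z/nZ → Γ̂ₙ → π₁(Σ_g) → 1 which splits whenever n divides 2g−2. -/
open scoped commutatorElement

/-- Generators of `π₁(T¹Σ_g)`: `none` is the fiber class `h`, `some (i, false)`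
is `aᵢ` and `some (i, true)` is `bᵢ`. -/
abbrev TBGen (g : ℕ) := Option (Fin g × Bool)

/-- The fiber generator `h`. -/
def hWord (g : ℕ) : FreeGroup (TBGen g) := FreeGroup.of none

/-- The generator `aᵢ`. -/
def aWord (g : ℕ) (i : Fin g) : FreeGroup (TBGen g) := FreeGroup.of (some (i, false))

/-- The generator `bᵢ`. -/
def bWord (g : ℕ) (i : Fin g) : FreeGroup (TBGen g) := FreeGroup.of (some (i, true))

/-- The relators of `π₁(T¹Σ_g)`: the main relator
`[a₁,b₁]⋯[a_g,b_g]·h^{−(2g−2)}`, and the centrality relators `[h, x]` for each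
generator `x`. -/
def tbRels (g : ℕ) : Set (FreeGroup (TBGen g)) :=
  {(List.ofFn fun i : Fin g => ⁅aWord g i, bWord g i⁆).prod * (hWord g ^ (2 * g - 2))⁻¹} ∪
    {r | ∃ x : TBGen g, r = ⁅hWord g, FreeGroup.of x⁆}

/-- The group `Γ̃ = π₁(T¹Σ_g)`, by its standard presentation. -/
def TangentBundleGroup (g : ℕ) := PresentedGroup (tbRels g)

instance (g : ℕ) : Group (TangentBundleGroup g) := by
  unfold TangentBundleGroup; infer_instance

/-- The surface group `π₁(Σ_g)` by its standard one-relator presentation. -/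
def SurfaceGroup (g : ℕ) :=
  PresentedGroup
    ({(List.ofFn fun i : Fin g =>
        ⁅FreeGroup.of (i, false), FreeGroup.of (i, true)⁆).prod} :
      Set (FreeGroup (Fin g × Bool)))

instance (g : ℕ) : Group (SurfaceGroup g) := by
  unfold SurfaceGroup; infer_instance

/-- The image of `h` in `Γ̃`. -/
def hElt (g : ℕ) : TangentBundleGroup g :=
  (PresentedGroup.of (rels := tbRels g) none : PresentedGroup (tbRels g))

/-!
Killing `h` identifies `Γ̃ ⧸ ⟨⟨h⟩⟩` with `π₁(Σ_g)`, and since `h` is central its normal closure is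
`⟨h⟩`, the kernel of `Γ̃ → π₁(Σ_g)`. For `g ≥ 2` the surface group is centreless: cutting along
`[a₀, b₀]` presents it as an amalgam of two free groups over an infinite cyclic group that is proper
in both. A central element of such an amalgam lies in the amalgamated subgroup (otherwise
conjugating its reduced word by a suitable letter changes the sequence of factors the word passes
through), and there it would have to commute with `a₀`. Hence the centre of `Γ̃` is `⟨h⟩`.

In `Γ̂ₙ` with `n ∣ 2g - 2` the relation becomes `∏ [aᵢ, bᵢ] = 1`, so `aᵢ, bᵢ ↦ aᵢ, bᵢ` is a section
of the projection, and the character counting `h` modulo `n` (well defined for the same reason)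
shows that the image of `h` has order exactly `n`.
-/

open Function

theorem Subgroup.map_mem_center_of_surjective {G K : Type*} [Group G] [Group K] {f : G →* K}
    (hf : Surjective f) {z : G} (hz : z ∈ Subgroup.center G) : f z ∈ Subgroup.center K := by
  rw [Subgroup.mem_center_iff] at hz ⊢
  intro y
  obtain ⟨x, rfl⟩ := hf y
  rw [← map_mul, ← map_mul, hz x]

theorem map_prod_ofFn_commutatorElement {M N : Type*} [Group M] [Group N] (f : M →* N) {k : ℕ}
    (x y : Fin k → M) :
    f (List.ofFn fun i => ⁅x i, y i⁆).prod =
      (List.ofFn fun i => ⁅f (x i), f (y i)⁆).prod := by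
  simp [map_list_prod, List.map_ofFn, Function.comp_def, map_commutatorElement]

theorem prod_ofFn_commutatorElement_eq_one {N : Type*} [CommGroup N] {k : ℕ} (x y : Fin k → N) :
    (List.ofFn fun i => ⁅x i, y i⁆).prod = 1 :=
  List.prod_eq_one fun _ hz => by
    obtain ⟨i, rfl⟩ := List.mem_ofFn.1 hz
    exact commutatorElement_eq_one_iff_commute.2 (Commute.all _ _)

theorem PresentedGroup.lift_of_eq_one {α : Type*} {rels : Set (FreeGroup α)} {r : FreeGroup α}
    (hr : r ∈ rels) : FreeGroup.lift (PresentedGroup.of (rels := rels)) r = 1 := by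
  rw [← PresentedGroup.one_of_mem hr]
  exact congrArg (· r) (FreeGroup.ext_hom (FreeGroup.lift PresentedGroup.of)
    (PresentedGroup.mk rels) fun _ => FreeGroup.lift_apply_of)

theorem Subgroup.center_le_ker_of_surjective {G K : Type*} [Group G] [Group K] {f : G →* K}
    (hf : Surjective f) (hK : Subgroup.center K = ⊥) : Subgroup.center G ≤ f.ker :=
  fun _ hz => by simpa [hK] using Subgroup.map_mem_center_of_surjective hf hz

theorem Subgroup.normalClosure_singleton_eq_zpowers {G : Type*} [Group G] {x : G}
    (hx : x ∈ Subgroup.center G) : Subgroup.normalClosure {x} = Subgroup.zpowers x := by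
  have : (Subgroup.zpowers x).Normal :=
    ⟨fun y hy c => by
      rwa [Subgroup.mem_center_iff.1 (Subgroup.zpowers_le.2 hx hy) c, mul_inv_cancel_right]⟩
  exact le_antisymm (Subgroup.normalClosure_le_normal (by simp))
    (Subgroup.zpowers_le.2 (Subgroup.subset_normalClosure rfl))

section zmodPowHom

variable {G : Type*} [Group G] {n : ℕ}

def zmodPowHom (x : G) (hx : x ^ n = 1) : Multiplicative (ZMod n) →* G :=
  AddMonoidHom.toMultiplicativeLeft
    (ZMod.lift n ⟨zmultiplesHom (Additive G) (Additive.ofMul x), by simp [← ofMul_pow, hx]⟩)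

theorem zmodPowHom_ofAdd_intCast (x : G) (hx : x ^ n = 1) (k : ℤ) :
    zmodPowHom x hx (Multiplicative.ofAdd (k : ZMod n)) = x ^ k := by
  simp [zmodPowHom]

theorem range_zmodPowHom (x : G) (hx : x ^ n = 1) :
    (zmodPowHom x hx).range = Subgroup.zpowers x := by
  ext y
  simp only [MonoidHom.mem_range, Subgroup.mem_zpowers_iff]
  constructor
  · rintro ⟨z, rfl⟩
    obtain ⟨k, hk⟩ := ZMod.intCast_surjective z.toAdd
    exact ⟨k, by rw [← zmodPowHom_ofAdd_intCast x hx, hk, ofAdd_toAdd]⟩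
  · rintro ⟨k, rfl⟩
    exact ⟨_, zmodPowHom_ofAdd_intCast x hx k⟩

end zmodPowHom

namespace Monoid.PushoutI

variable {ι : Type*} {G : ι → Type*} [∀ i, Group (G i)] {H : Type*} [Group H]
  {φ : ∀ i, H →* G i}

variable (φ) in
def listProd (L : List (Σ i, G i)) : PushoutI φ :=
  (L.map fun l => of l.1 l.2).prod

@[simp]
theorem listProd_nil : listProd φ [] = 1 := rfl

@[simp]
theorem listProd_cons (l : Σ i, G i) (L : List (Σ i, G i)) :
    listProd φ (l :: L) = of l.1 l.2 * listProd φ L := List.prod_cons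

@[simp]
theorem listProd_append (L₁ L₂ : List (Σ i, G i)) :
    listProd φ (L₁ ++ L₂) = listProd φ L₁ * listProd φ L₂ := by
  simp [listProd]

variable (φ) in
def IsReducedList (L : List (Σ i, G i)) : Prop :=
  (∀ l ∈ L, l.2 ∉ (φ l.1).range) ∧ L.IsChain fun l l' => l.1 ≠ l'.1

namespace IsReducedList

def toWord {L : List (Σ i, G i)} (hL : IsReducedList φ L) : CoprodI.Word G :=
  ⟨L, fun l hl h1 => hL.1 l hl (h1 ▸ one_mem _), hL.2⟩

theorem ofCoprodI_toWord_prod {L : List (Σ i, G i)} (hL : IsReducedList φ L) :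
    ofCoprodI hL.toWord.prod = listProd φ L := by
  simp [toWord, listProd, CoprodI.Word.prod, map_list_prod, Function.comp_def]

theorem map_fst_eq_of_listProd_eq (hφ : ∀ i, Injective (φ i)) {L₁ L₂ : List (Σ i, G i)}
    (h₁ : IsReducedList φ L₁) (h₂ : IsReducedList φ L₂)
    (h : listProd φ L₁ = listProd φ L₂) :
    L₁.map Sigma.fst = L₂.map Sigma.fst := by
  obtain ⟨d⟩ := NormalWord.transversal_nonempty φ hφ
  obtain ⟨w₁, hw₁, hfst₁⟩ := Reduced.exists_normalWord_prod_eq d (w := h₁.toWord) h₁.1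
  obtain ⟨w₂, hw₂, hfst₂⟩ := Reduced.exists_normalWord_prod_eq d (w := h₂.toWord) h₂.1
  obtain rfl : w₁ = w₂ := NormalWord.prod_injective <| by
    rw [hw₁, hw₂, ofCoprodI_toWord_prod, ofCoprodI_toWord_prod, h]
  exact hfst₁.symm.trans hfst₂

theorem conj {l : Σ i, G i} {L : List (Σ i, G i)} (h : IsReducedList φ (l :: L)) {j : ι}
    {g : G j} (hg : g ∉ (φ j).range) (hfirst : l.1 ≠ j)
    (hlast : ((l :: L).getLast (List.cons_ne_nil _ _)).1 ≠ j) :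
    IsReducedList φ (⟨j, g⟩ :: (l :: L) ++ [⟨j, g⁻¹⟩]) := by
  refine ⟨fun m hm => ?_, ?_⟩
  · rw [List.cons_append, List.mem_cons, List.mem_append, List.mem_singleton] at hm
    rcases hm with rfl | hm | rfl
    exacts [hg, h.1 m hm, fun h => hg (by simpa using h)]
  · rw [List.cons_append, List.isChain_cons, List.isChain_append]
    refine ⟨by simpa using hfirst.symm, h.2, List.isChain_singleton _, ?_⟩
    simpa [List.getLast?_eq_some_getLast (List.cons_ne_nil l L)] using hlast

theorem rotate {l : Σ i, G i} {L : List (Σ i, G i)} (h : IsReducedList φ (l :: L))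
    (hlast : ((l :: L).getLast (List.cons_ne_nil _ _)).1 ≠ l.1) :
    IsReducedList φ (L ++ [l]) := by
  refine ⟨fun m hm => ?_, ?_⟩
  · rw [List.mem_append, List.mem_singleton] at hm
    exact h.1 m (hm.elim (List.mem_cons_of_mem l) (· ▸ List.mem_cons_self))
  · rw [List.isChain_append]
    refine ⟨h.2.tail, List.isChain_singleton _, ?_⟩
    rcases L with _ | ⟨m, L⟩
    · simp
    · simpa [List.getLast?_eq_some_getLast (List.cons_ne_nil m L), List.getLast_cons] using hlast

end IsReducedList

theorem NormalWord.snd_notMem_range_of_mem {d : NormalWord.Transversal φ} (w : NormalWord d)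
    {l : Σ i, G i} (hl : l ∈ w.toList) : l.2 ∉ (φ l.1).range := fun hr =>
  w.ne_one l hl <| by
    have h := (d.compl l.1).1 (a₁ := (⟨l.2, hr⟩, ⟨1, d.one_mem l.1⟩))
      (a₂ := (⟨1, one_mem _⟩, ⟨l.2, w.normalized l.1 l.2 hl⟩)) (by simp)
    simpa using congrArg (fun x => (x.1 : G l.1)) h

theorem exists_isReducedList_listProd_eq (hφ : ∀ i, Injective (φ i)) {z : PushoutI φ}
    (hz : z ∉ (base φ).range) :
    ∃ l L, IsReducedList φ (l :: L) ∧ listProd φ (l :: L) = z := by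
  classical
  obtain ⟨d⟩ := NormalWord.transversal_nonempty φ hφ
  set w : NormalWord d := z • NormalWord.empty
  have hred : IsReducedList φ w.toList :=
    ⟨fun l hl => w.snd_notMem_range_of_mem hl, w.chain_ne⟩
  have hwz : base φ w.head * listProd φ w.toList = z := by
    rw [← hred.ofCoprodI_toWord_prod]
    exact (NormalWord.prod_smul z NormalWord.empty).trans (by simp)
  rcases hcons : w.toList with _ | ⟨⟨i, g⟩, L⟩
  · exact (hz ⟨w.head, by simpa [hcons] using hwz⟩).elim
  -- absorb the base part into the first letter
  refine ⟨⟨i, φ i w.head * g⟩, L, ⟨?_, ?_⟩, ?_⟩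
  · have hletters := hcons ▸ hred.1
    simp only [List.mem_cons, forall_eq_or_imp] at hletters ⊢
    refine ⟨fun hr => hletters.1 ?_, hletters.2⟩
    exact (Subgroup.mul_mem_cancel_left _ (MonoidHom.mem_range.2 ⟨w.head, rfl⟩)).1 hr
  · have hchain := List.isChain_cons.1 (hcons ▸ hred.2)
    exact List.isChain_cons.2 hchain
  · rw [← hwz, hcons, listProd_cons, listProd_cons, map_mul, of_apply_eq_base, mul_assoc]

theorem center_le_range_base (hφ : ∀ i, Injective (φ i))
    (hproper : ∀ i, ∃ g : G i, g ∉ (φ i).range) (hnei : ∀ i : ι, ∃ j, j ≠ i) :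
    Subgroup.center (PushoutI φ) ≤ (base φ).range := by
  intro z hz
  by_contra hzb
  obtain ⟨l, L, hred, rfl⟩ := exists_isReducedList_listProd_eq hφ hzb
  have hconj (x : PushoutI φ) : x * listProd φ (l :: L) * x⁻¹ = listProd φ (l :: L) := by
    rw [Subgroup.mem_center_iff.1 hz x, mul_inv_cancel_right]
  by_cases hlast : ((l :: L).getLast (List.cons_ne_nil _ _)).1 = l.1
  · -- conjugating by a letter from another factor lengthens the word by two
    obtain ⟨j, hj⟩ := hnei l.1
    obtain ⟨g, hg⟩ := hproper j
    have hlen := congrArg List.length <|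
      (hred.conj hg hj.symm (hlast ▸ hj.symm)).map_fst_eq_of_listProd_eq hφ hred
        (by simpa [mul_assoc] using hconj (of j g))
    simp only [List.map_cons, List.map_append, List.length_cons, List.length_append,
      List.length_map, List.length_nil, List.cons_append] at hlen
    omega
  · -- conjugating by the first letter rotates the word
    have hfst := (hred.rotate hlast).map_fst_eq_of_listProd_eq hφ hred
      (by simpa [mul_assoc] using hconj (of l.1 l.2)⁻¹)
    rcases L with _ | ⟨m, L⟩
    · exact hlast rfl
    · simp only [List.cons_append, List.map_cons, List.cons.injEq] at hfst
      exact (List.isChain_cons_cons.1 hred.2).1 hfst.1.symm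

end Monoid.PushoutI

namespace SurfaceGroup

open Monoid DihedralGroup

def relator (k : ℕ) : FreeGroup (Fin k × Bool) :=
  (List.ofFn fun i : Fin k => ⁅FreeGroup.of (i, false), FreeGroup.of (i, true)⁆).prod

def of {k : ℕ} (p : Fin k × Bool) : SurfaceGroup k := PresentedGroup.of p

theorem prod_commutatorElement_eq_one (k : ℕ) :
    (List.ofFn fun i : Fin k => ⁅of (i, false), of (i, true)⁆).prod = 1 := by
  have h := PresentedGroup.lift_of_eq_one (r := relator k) (Set.mem_singleton _)
  rwa [relator, map_prod_ofFn_commutatorElement] at h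

theorem relator_one :
    relator 1 = ⁅FreeGroup.of ((0 : Fin 1), false), FreeGroup.of ((0 : Fin 1), true)⁆ := by
  simp [relator]

theorem lift_relator_succ {M : Type*} [Group M] {k : ℕ} (f : Fin (k + 1) × Bool → M) :
    FreeGroup.lift f (relator (k + 1)) =
      ⁅f (0, false), f (0, true)⁆ *
        FreeGroup.lift (fun p : Fin k × Bool => f (p.1.succ, p.2)) (relator k) := by
  rw [relator, relator, map_prod_ofFn_commutatorElement, map_prod_ofFn_commutatorElement,
    List.ofFn_succ, List.prod_cons]
  simp only [FreeGroup.lift_apply_of]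

/-- Detects that the relator has infinite order and that its non-trivial powers do not commute
with `a₀`. -/
def toDihedral (k : ℕ) : FreeGroup (Fin (k + 1) × Bool) →* DihedralGroup 0 :=
  FreeGroup.lift fun p => if p.1 = 0 then cond p.2 (r 1) (sr 0) else 1

theorem toDihedral_relator (k : ℕ) : toDihedral k (relator (k + 1)) = r (-2) := by
  rw [toDihedral, lift_relator_succ]
  have htriv : (FreeGroup.lift fun _ : Fin k × Bool => (1 : DihedralGroup 0)) = 1 :=
    FreeGroup.ext_hom _ _ fun _ => FreeGroup.lift_apply_of
  simp only [Fin.succ_ne_zero, if_false, if_true, htriv, MonoidHom.one_apply, mul_one,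
    cond_false, cond_true]
  rw [commutatorElement_def, inv_sr, inv_r, sr_mul_r, sr_mul_sr, r_mul_r]
  ring_nf

theorem toDihedral_relator_zpow (k : ℕ) (x : ℤ) :
    toDihedral k (relator (k + 1) ^ x) = r (Int.cast (-2 * x)) := by
  rw [map_zpow, toDihedral_relator, r_zpow]
  push_cast
  rfl

theorem relator_zpow_injective (k : ℕ) : Injective fun x : ℤ => relator (k + 1) ^ x := by
  intro x y hxy
  have h := congrArg (toDihedral k) hxy
  simp only [toDihedral_relator_zpow] at h
  have := Int.cast_injective (α := ZMod 0) (r.inj h)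
  omega

theorem relator_zpow_ne_of (k : ℕ) (x : ℤ) :
    relator (k + 1) ^ x ≠ FreeGroup.of (0, false) := by
  intro h
  have h' := congrArg (toDihedral k) h
  rw [toDihedral_relator_zpow, toDihedral, FreeGroup.lift_apply_of] at h'
  simp at h'

theorem eq_zero_of_commute_relator_zpow (k : ℕ) {x : ℤ}
    (h : Commute (FreeGroup.of (0, false)) (relator (k + 1) ^ x)) : x = 0 := by
  have h' := congrArg (toDihedral k) h.eq
  rw [map_mul, map_mul, toDihedral_relator_zpow, toDihedral, FreeGroup.lift_apply_of] at h'
  simp only [↓reduceIte, cond_false, sr_mul_r, r_mul_sr, sr.injEq, zero_add, zero_sub,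
    ← Int.cast_neg] at h'
  have := Int.cast_injective (α := ZMod 0) h'
  omega

variable (m : ℕ)

/-- Cutting `Σ_{m+2}` along the curve `[a₀, b₀]` leaves a one-holed torus (`false`, generators
`a₀, b₀`) and a one-holed surface of genus `m + 1` (`true`, generators `aᵢ, bᵢ` for `i ≥ 1`), whose
fundamental groups are free; `π₁(Σ_{m+2})` is their amalgam along the boundary curve. -/
abbrev Piece (b : Bool) : Type := FreeGroup (Fin (cond b m 0 + 1) × Bool)

def boundary : ∀ b, Multiplicative ℤ →* Piece m b
  | false => zpowersHom _ (relator 1)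
  | true => zpowersHom _ (relator (m + 1))⁻¹

abbrev Amalgam : Type := PushoutI (boundary m)

theorem boundary_injective : ∀ b, Injective (boundary m b)
  | false => relator_zpow_injective 0
  | true => fun x y hxy => by
    have : relator (m + 1) ^ (-x.toAdd) = relator (m + 1) ^ (-y.toAdd) := by
      simpa [boundary, zpow_neg] using hxy
    simpa using relator_zpow_injective m this

theorem exists_notMem_range_boundary : ∀ b, ∃ g, g ∉ (boundary m b).range
  | false => ⟨FreeGroup.of (0, false), fun ⟨x, hx⟩ => relator_zpow_ne_of 0 x.toAdd hx⟩
  | true => ⟨FreeGroup.of (0, false), fun ⟨x, hx⟩ =>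
      relator_zpow_ne_of m (-x.toAdd) (by simpa [boundary, zpow_neg] using hx)⟩

theorem center_amalgam_eq_bot : Subgroup.center (Amalgam m) = ⊥ := by
  refine eq_bot_iff.2 fun z hz => ?_
  obtain ⟨x, rfl⟩ := PushoutI.center_le_range_base (boundary_injective m)
    (exists_notMem_range_boundary m) (fun b => ⟨!b, by cases b <;> decide⟩) hz
  rw [← PushoutI.of_apply_eq_base _ false] at hz ⊢
  have hcomm := Subgroup.mem_center_iff.1 hz (PushoutI.of false (FreeGroup.of (0, false)))
  rw [← map_mul, ← map_mul] at hcomm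
  have hx := eq_zero_of_commute_relator_zpow 0
    (PushoutI.of_injective (boundary_injective m) false hcomm)
  simp [boundary, hx]

theorem of_relator_one : PushoutI.of (φ := boundary m) false (relator 1) =
    PushoutI.base (boundary m) (Multiplicative.ofAdd 1) := by
  rw [← PushoutI.of_apply_eq_base _ false]
  simp [boundary]

theorem of_relator_succ : PushoutI.of (φ := boundary m) true (relator (m + 1)) =
    (PushoutI.base (boundary m) (Multiplicative.ofAdd 1))⁻¹ := by
  rw [← PushoutI.of_apply_eq_base _ true, ← map_inv]
  simp [boundary]

def toAmalgam : SurfaceGroup (m + 2) →* Amalgam m :=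
  PresentedGroup.toGroup (f := fun p => Fin.cases (PushoutI.of false (FreeGroup.of (0, p.2)))
    (fun i => PushoutI.of true (FreeGroup.of (i, p.2))) p.1) <| by
    rintro _ rfl
    have hsucc : (FreeGroup.lift fun p : Fin (m + 1) × Bool =>
        PushoutI.of (φ := boundary m) true (FreeGroup.of p)) =
        (PushoutI.of true : Piece m true →* Amalgam m) :=
      FreeGroup.ext_hom _ _ fun _ => FreeGroup.lift_apply_of
    change FreeGroup.lift _ (relator (m + 2)) = 1
    rw [lift_relator_succ]
    simp only [Fin.cases_zero, Fin.cases_succ, Prod.mk.eta, hsucc, ← map_commutatorElement]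
    rw [← relator_one, of_relator_one, of_relator_succ, mul_inv_cancel]

def pieceIndex : ∀ b, Fin (cond b m 0 + 1) → Fin (m + 2)
  | false => fun _ => 0
  | true => Fin.succ

def ofAmalgam : Amalgam m →* SurfaceGroup (m + 2) :=
  PushoutI.lift (fun b => FreeGroup.lift fun p => of (pieceIndex m b p.1, p.2))
    (zpowersHom _ ⁅(of (0, false) : SurfaceGroup (m + 2)), of (0, true)⁆) <| by
    have hrel : ⁅(of (0, false) : SurfaceGroup (m + 2)), of (0, true)⁆ *
        FreeGroup.lift (fun p : Fin (m + 1) × Bool => of (p.1.succ, p.2)) (relator (m + 1)) =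
          1 := by
      rw [← lift_relator_succ]
      exact PresentedGroup.lift_of_eq_one rfl
    rintro (_ | _) <;> ext
    · simp [boundary, relator_one, pieceIndex, map_commutatorElement]
    · simp [boundary, pieceIndex, eq_inv_of_mul_eq_one_left hrel]

theorem toAmalgam_of (p : Fin (m + 2) × Bool) :
    toAmalgam m (of p) = Fin.cases (PushoutI.of false (FreeGroup.of (0, p.2)))
      (fun i => PushoutI.of true (FreeGroup.of (i, p.2))) p.1 :=
  PresentedGroup.toGroup.of _

theorem ofAmalgam_of (b : Bool) (p : Fin (cond b m 0 + 1) × Bool) :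
    ofAmalgam m (PushoutI.of b (FreeGroup.of p)) = of (pieceIndex m b p.1, p.2) :=
  (PushoutI.lift_of _ _ _ _).trans FreeGroup.lift_apply_of

theorem ofAmalgam_comp_toAmalgam :
    (ofAmalgam m).comp (toAmalgam m) = MonoidHom.id (SurfaceGroup (m + 2)) := by
  refine PresentedGroup.ext fun ⟨i, c⟩ => ?_
  change ofAmalgam m (toAmalgam m (of (i, c))) = of (i, c)
  cases i using Fin.cases <;> simp [toAmalgam_of, ofAmalgam_of, pieceIndex]

theorem toAmalgam_comp_ofAmalgam :
    (toAmalgam m).comp (ofAmalgam m) = MonoidHom.id (Amalgam m) := by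
  refine PushoutI.hom_ext_nonempty fun b => FreeGroup.ext_hom _ _ fun ⟨i, c⟩ => ?_
  change toAmalgam m (ofAmalgam m (PushoutI.of b (FreeGroup.of (i, c)))) =
    PushoutI.of b (FreeGroup.of (i, c))
  cases b
  · simp [toAmalgam_of, ofAmalgam_of, pieceIndex, Fin.fin_one_eq_zero i]
  · simp [toAmalgam_of, ofAmalgam_of, pieceIndex]

def equivAmalgam : SurfaceGroup (m + 2) ≃* Amalgam m :=
  MonoidHom.toMulEquiv _ _ (ofAmalgam_comp_toAmalgam m) (toAmalgam_comp_ofAmalgam m)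

theorem center_eq_bot {g : ℕ} (hg : 2 ≤ g) : Subgroup.center (SurfaceGroup g) = ⊥ := by
  obtain ⟨m, rfl⟩ := Nat.exists_eq_add_of_le' hg
  refine eq_bot_iff.2 fun z hz => ?_
  have h := Subgroup.map_mem_center_of_surjective (equivAmalgam m).surjective hz
  rw [center_amalgam_eq_bot, Subgroup.mem_bot] at h
  exact (equivAmalgam m).injective (h.trans (map_one _).symm)

end SurfaceGroup

namespace TangentBundleGroup

open Subgroup

variable {g : ℕ}

def of (x : TBGen g) : TangentBundleGroup g := PresentedGroup.of x

theorem mk_eq_one {r : FreeGroup (TBGen g)} (hr : r ∈ tbRels g) :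
    (PresentedGroup.mk (tbRels g) r : TangentBundleGroup g) = 1 :=
  PresentedGroup.one_of_mem hr

theorem hElt_mem_center : hElt g ∈ center (TangentBundleGroup g) := by
  have hcomm (x : TBGen g) : of x ∈ centralizer {hElt g} := by
    rw [mem_centralizer_singleton_iff]
    have h := mk_eq_one (Or.inr ⟨x, rfl⟩ : ⁅hWord g, FreeGroup.of x⁆ ∈ tbRels g)
    rw [map_commutatorElement, commutatorElement_eq_one_iff_mul_comm] at h
    exact h.symm
  exact mem_center_iff.2 fun y =>
    mem_centralizer_singleton_iff.1 (PresentedGroup.generated_by _ _ hcomm y)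

theorem prod_commutatorElement_eq :
    (List.ofFn fun i : Fin g => ⁅of (some (i, false)), of (some (i, true))⁆).prod =
      hElt g ^ (2 * g - 2) := by
  have h := mk_eq_one (Or.inl rfl : _ ∈ tbRels g)
  rwa [map_mul, map_inv, map_pow, mul_inv_eq_one, map_prod_ofFn_commutatorElement] at h

variable (g) in
def toSurfaceGroup : TangentBundleGroup g →* SurfaceGroup g :=
  PresentedGroup.toGroup (f := fun x => x.elim 1 SurfaceGroup.of) <| by
    rintro _ (rfl | ⟨x, rfl⟩)
    · rw [map_mul, map_inv, map_pow, map_prod_ofFn_commutatorElement]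
      simp only [hWord, aWord, bWord, FreeGroup.lift_apply_of, Option.elim_none,
        Option.elim_some, one_pow, inv_one, mul_one]
      exact SurfaceGroup.prod_commutatorElement_eq_one g
    · simp [hWord, map_commutatorElement]

theorem toSurfaceGroup_of_some (p : Fin g × Bool) :
    toSurfaceGroup g (of (some p)) = SurfaceGroup.of p :=
  PresentedGroup.toGroup.of _

theorem toSurfaceGroup_hElt : toSurfaceGroup g (hElt g) = 1 :=
  PresentedGroup.toGroup.of _

theorem toSurfaceGroup_surjective : Surjective (toSurfaceGroup g) := fun y =>
  PresentedGroup.generated_by _ (toSurfaceGroup g).range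
    (fun p => ⟨of (some p), toSurfaceGroup_of_some p⟩) y

section Quotient

variable (N : Subgroup (TangentBundleGroup g)) [N.Normal]

def surfaceSection (hN : hElt g ^ (2 * g - 2) ∈ N) :
    SurfaceGroup g →* TangentBundleGroup g ⧸ N :=
  PresentedGroup.toGroup (f := fun p => QuotientGroup.mk' N (of (some p))) <| by
    rintro _ rfl
    rw [map_prod_ofFn_commutatorElement]
    simp only [FreeGroup.lift_apply_of]
    rw [← map_prod_ofFn_commutatorElement, prod_commutatorElement_eq]
    exact (QuotientGroup.eq_one_iff _).2 hN

theorem surfaceSection_of (hN : hElt g ^ (2 * g - 2) ∈ N) (p : Fin g × Bool) :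
    surfaceSection N hN (SurfaceGroup.of p) = QuotientGroup.mk' N (of (some p)) :=
  PresentedGroup.toGroup.of _

def quotientToSurfaceGroup (hN : N ≤ (toSurfaceGroup g).ker) :
    TangentBundleGroup g ⧸ N →* SurfaceGroup g :=
  QuotientGroup.lift N (toSurfaceGroup g) hN

theorem quotientToSurfaceGroup_comp_surfaceSection (hN : N ≤ (toSurfaceGroup g).ker)
    (hN' : hElt g ^ (2 * g - 2) ∈ N) :
    (quotientToSurfaceGroup N hN).comp (surfaceSection N hN') = MonoidHom.id _ :=
  PresentedGroup.ext fun p => by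
    change quotientToSurfaceGroup N hN (surfaceSection N hN' (SurfaceGroup.of p)) =
      SurfaceGroup.of p
    rw [surfaceSection_of]
    exact toSurfaceGroup_of_some p

end Quotient

theorem normalClosure_hElt_le_ker : normalClosure {hElt g} ≤ (toSurfaceGroup g).ker :=
  normalClosure_le_normal (by simpa using toSurfaceGroup_hElt)

theorem hElt_pow_mem_normalClosure : hElt g ^ (2 * g - 2) ∈ normalClosure {hElt g} :=
  pow_mem (subset_normalClosure (Set.mem_singleton _)) _

theorem surfaceSection_comp_quotientToSurfaceGroup :
    (surfaceSection _ hElt_pow_mem_normalClosure).comp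
        (quotientToSurfaceGroup _ normalClosure_hElt_le_ker) =
      MonoidHom.id (TangentBundleGroup g ⧸ normalClosure {hElt g}) := by
  refine QuotientGroup.monoidHom_ext _ (PresentedGroup.ext fun x => ?_)
  change surfaceSection _ hElt_pow_mem_normalClosure (toSurfaceGroup g (of x)) =
    QuotientGroup.mk' _ (of x)
  cases x with
  | none =>
    rw [show of none = hElt g from rfl, toSurfaceGroup_hElt, map_one, eq_comm,
      QuotientGroup.mk'_apply, QuotientGroup.eq_one_iff]
    exact subset_normalClosure rfl
  | some p => rw [toSurfaceGroup_of_some, surfaceSection_of]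

variable (g) in
def quotientEquivSurfaceGroup :
    TangentBundleGroup g ⧸ normalClosure {hElt g} ≃* SurfaceGroup g :=
  MonoidHom.toMulEquiv _ _ surfaceSection_comp_quotientToSurfaceGroup
    (quotientToSurfaceGroup_comp_surfaceSection _ _ _)

theorem ker_toSurfaceGroup : (toSurfaceGroup g).ker = zpowers (hElt g) := by
  rw [← normalClosure_singleton_eq_zpowers hElt_mem_center]
  exact ((QuotientGroup.injective_lift_iff _ _ normalClosure_hElt_le_ker).1
    (quotientEquivSurfaceGroup g).injective).symm

theorem center_eq_zpowers (hg : 2 ≤ g) : center (TangentBundleGroup g) = zpowers (hElt g) :=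
  le_antisymm
    (ker_toSurfaceGroup ▸ center_le_ker_of_surjective toSurfaceGroup_surjective
      (SurfaceGroup.center_eq_bot hg))
    (zpowers_le.2 hElt_mem_center)

variable {n : ℕ}

theorem hElt_pow_mem_normalClosure_pow (hdvd : n ∣ 2 * g - 2) :
    hElt g ^ (2 * g - 2) ∈ normalClosure {hElt g ^ n} := by
  obtain ⟨k, hk⟩ := hdvd
  rw [hk, pow_mul]
  exact pow_mem (subset_normalClosure (Set.mem_singleton _)) k

variable (n) in
theorem normalClosure_hElt_pow_le_ker :
    normalClosure {hElt g ^ n} ≤ (toSurfaceGroup g).ker :=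
  normalClosure_le_normal (by simp [toSurfaceGroup_hElt])

variable (g n) in
def fiberInclusion :
    Multiplicative (ZMod n) →* TangentBundleGroup g ⧸ normalClosure {hElt g ^ n} :=
  zmodPowHom (QuotientGroup.mk' _ (hElt g)) <| by
    rw [← map_pow, QuotientGroup.mk'_apply, QuotientGroup.eq_one_iff]
    exact subset_normalClosure (Set.mem_singleton _)

def fiberCharacter (hdvd : n ∣ 2 * g - 2) : TangentBundleGroup g →* Multiplicative (ZMod n) :=
  PresentedGroup.toGroup (f := fun x => x.elim (Multiplicative.ofAdd 1) fun _ => 1) <| by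
    rintro _ (rfl | ⟨x, rfl⟩)
    · rw [map_mul, map_inv, map_pow, map_prod_ofFn_commutatorElement,
        prod_ofFn_commutatorElement_eq_one, one_mul, inv_eq_one, hWord, FreeGroup.lift_apply_of]
      simpa [← ofAdd_nsmul] using (ZMod.natCast_eq_zero_iff _ _).2 hdvd
    · rw [map_commutatorElement, commutatorElement_eq_one_iff_commute]
      exact Commute.all _ _

theorem fiberCharacter_hElt (hdvd : n ∣ 2 * g - 2) :
    fiberCharacter hdvd (hElt g) = Multiplicative.ofAdd 1 :=
  PresentedGroup.toGroup.of _

theorem fiberInclusion_injective (hdvd : n ∣ 2 * g - 2) : Injective (fiberInclusion g n) := by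
  let χ := QuotientGroup.lift (normalClosure {hElt g ^ n}) (fiberCharacter hdvd) <|
    normalClosure_le_normal <| Set.singleton_subset_iff.2 <| by
      simp [map_pow, fiberCharacter_hElt, ← ofAdd_nsmul]
  refine LeftInverse.injective (g := χ) fun z => ?_
  obtain ⟨k, hk⟩ := ZMod.intCast_surjective z.toAdd
  rw [← ofAdd_toAdd z, ← hk, fiberInclusion, zmodPowHom_ofAdd_intCast, map_zpow]
  simp [χ, fiberCharacter_hElt, ← ofAdd_zsmul]

theorem range_fiberInclusion :
    (fiberInclusion g n).range = zpowers (QuotientGroup.mk' _ (hElt g)) :=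
  range_zmodPowHom _ _

theorem fiberInclusion_mem_center (z : Multiplicative (ZMod n)) :
    fiberInclusion g n z ∈ center (TangentBundleGroup g ⧸ normalClosure {hElt g ^ n}) := by
  have hz : fiberInclusion g n z ∈ zpowers (QuotientGroup.mk' _ (hElt g)) :=
    range_fiberInclusion ▸ ⟨z, rfl⟩
  exact zpowers_le.2 (map_mem_center_of_surjective (QuotientGroup.mk'_surjective _)
    hElt_mem_center) hz

theorem ker_quotientToSurfaceGroup :
    (quotientToSurfaceGroup _ (normalClosure_hElt_pow_le_ker (g := g) n)).ker =
      (fiberInclusion g n).range := by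
  rw [quotientToSurfaceGroup, QuotientGroup.ker_lift, ker_toSurfaceGroup, MonoidHom.map_zpowers,
    range_fiberInclusion]

end TangentBundleGroup

theorem tangent_bundle_group_center_quotient_and_split_extension_general
    (g n : ℕ) (hg : 2 ≤ g) (hdvd : n ∣ 2 * g - 2) :
    Subgroup.center (TangentBundleGroup g) = Subgroup.zpowers (hElt g) ∧
    Nonempty
      ((TangentBundleGroup g ⧸ Subgroup.normalClosure {hElt g}) ≃* SurfaceGroup g) ∧
    ∃ (ι : Multiplicative (ZMod n) →*
          TangentBundleGroup g ⧸ Subgroup.normalClosure {hElt g ^ n})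
      (π : (TangentBundleGroup g ⧸ Subgroup.normalClosure {hElt g ^ n}) →*
          SurfaceGroup g),
      Function.Injective ι ∧
      (∀ z, ι z ∈ Subgroup.center _) ∧
      Function.Surjective π ∧
      π.ker = ι.range ∧
      ∃ σ : SurfaceGroup g →*
          TangentBundleGroup g ⧸ Subgroup.normalClosure {hElt g ^ n},
        π.comp σ = MonoidHom.id (SurfaceGroup g) := by
  open TangentBundleGroup in
  have hsplit := quotientToSurfaceGroup_comp_surfaceSection _
    (normalClosure_hElt_pow_le_ker n) (hElt_pow_mem_normalClosure_pow hdvd)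
  exact ⟨center_eq_zpowers hg, ⟨quotientEquivSurfaceGroup g⟩, fiberInclusion g n,
    quotientToSurfaceGroup _ (normalClosure_hElt_pow_le_ker n), fiberInclusion_injective hdvd,
    fiberInclusion_mem_center, LeftInverse.surjective (DFunLike.congr_fun hsplit),
    ker_quotientToSurfaceGroup, _, hsplit⟩

/-- In `Γ̃ = ⟨h, aᵢ, bᵢ ∣ ∏[aᵢ,bᵢ] = h^{2g−2}, h central⟩` with `g ≥ 2`:
`h` generates the center; the quotient by `⟨h⟩` is the surface group
`π₁(Σ_g)`; and for `n ∣ 2g−2` the quotient `Γ̂ₙ = Γ̃/⟨⟨hⁿ⟩⟩` is a central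
extension `0 → ℤ/nℤ → Γ̂ₙ → π₁(Σ_g) → 1` which splits. -/
theorem tangent_bundle_group_center_quotient_and_split_extension
    (g n : ℕ) (hg : 2 ≤ g) (hn : 0 < n) (hdvd : n ∣ 2 * g - 2) :
    Subgroup.center (TangentBundleGroup g) = Subgroup.zpowers (hElt g) ∧
    Nonempty
      ((TangentBundleGroup g ⧸ Subgroup.normalClosure {hElt g}) ≃* SurfaceGroup g) ∧
    ∃ (ι : Multiplicative (ZMod n) →*
          TangentBundleGroup g ⧸ Subgroup.normalClosure {hElt g ^ n})
      (π : (TangentBundleGroup g ⧸ Subgroup.normalClosure {hElt g ^ n}) →*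
          SurfaceGroup g),
      Function.Injective ι ∧
      (∀ z, ι z ∈ Subgroup.center _) ∧
      Function.Surjective π ∧
      π.ker = ι.range ∧
      ∃ σ : SurfaceGroup g →*
          TangentBundleGroup g ⧸ Subgroup.normalClosure {hElt g ^ n},
        π.comp σ = MonoidHom.id (SurfaceGroup g) :=
  tangent_bundle_group_center_quotient_and_split_extension_general g n hg hdvd
end
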